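/- arXiv:2112.06176 — 9 statements merged into one kernel-verified Lean document; each statement's English description precedes it below -/
import Mathlib

section
/- Let j ∈ {1,…,q}, δ > 0, ν > 0 and ς ∈ (0,1]. Let d̂ ∈ ℝⁿ with ‖d̂‖ ≤ δ be a maximizer of the exact Taylor decrement over the ball, i.e. Δt_j(d̂) = φ_j^δ, and let d ∈ ℝⁿ with ‖d‖ ≤ δ satisfy ς·φ̄_j^δ ≤ Δt̄_j(d). If |(T̄_ℓ − T_ℓ)[d̂,…,d̂]| ≤ (ν/2)·Δt̄_j(d̂) for every ℓ ∈ {1,…,j}, then φ_j^δ ≤ ((1+ν)/ς)·Δt̄_j(d). -/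
open scoped BigOperators

/-- The (inexact or exact) Taylor decrement `Δt_j(d) = -∑_{ℓ=1}^j (1/ℓ!) T_ℓ[d,…,d]`
built from a family of continuous `ℓ`-multilinear forms `T ℓ` on `ℝⁿ`. -/
noncomputable def taylorDecrement {n : ℕ}
    (T : ∀ ℓ : ℕ, ContinuousMultilinearMap ℝ (fun _ : Fin ℓ => EuclideanSpace ℝ (Fin n)) ℝ)
    (j : ℕ) (d : EuclideanSpace ℝ (Fin n)) : ℝ :=
  -∑ ℓ ∈ Finset.Icc 1 j, (1 / (Nat.factorial ℓ : ℝ)) * T ℓ (fun _ => d)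

/-- The optimality measure `φ_j^δ = sup_{‖d‖ ≤ δ} Δt_j(d)`. -/
noncomputable def optimalityMeasure {n : ℕ}
    (T : ∀ ℓ : ℕ, ContinuousMultilinearMap ℝ (fun _ : Fin ℓ => EuclideanSpace ℝ (Fin n)) ℝ)
    (j : ℕ) (δ : ℝ) : ℝ :=
  sSup {x : ℝ | ∃ d : EuclideanSpace ℝ (Fin n), ‖d‖ ≤ δ ∧ x = taylorDecrement T j d}

/-!
Since `∑_{ℓ=1}^j 1/ℓ! ≤ 2`, the termwise error bounds along `d̂` give
`Δt_j(d̂) ≤ Δt̄_j(d̂) + ν Δt̄_j(d̂)`. Then `Δt̄_j(d̂) ≤ φ̄_j^δ ≤ Δt̄_j(d) / ς`,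
the first because `d̂` lies in the ball and the second by the choice of `d`.
-/

open Finset

theorem sum_Icc_one_inv_factorial_le_two (j : ℕ) :
    ∑ ℓ ∈ Icc 1 j, (1 / (ℓ.factorial : ℝ)) ≤ 2 := by
  have hIcc : Icc 1 j = {m ∈ range (j + 1) | 1 ≤ m} := by
    ext m
    simp only [mem_Icc, mem_filter, mem_range]
    omega
  rw [hIcc]
  simpa using Complex.sum_div_factorial_le (α := ℝ) 1 (j + 1) one_pos

section TaylorDecrement

variable {n : ℕ}
  (T Tb : ∀ ℓ : ℕ, ContinuousMultilinearMap ℝ (fun _ : Fin ℓ => EuclideanSpace ℝ (Fin n)) ℝ)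

theorem taylorDecrement_sub_taylorDecrement (j : ℕ) (d : EuclideanSpace ℝ (Fin n)) :
    taylorDecrement T j d - taylorDecrement Tb j d =
      ∑ ℓ ∈ Icc 1 j, (1 / (ℓ.factorial : ℝ)) * (Tb ℓ (fun _ => d) - T ℓ (fun _ => d)) := by
  simp only [taylorDecrement, neg_sub_neg, ← sum_sub_distrib, mul_sub]

theorem abs_taylorDecrement_sub_le {j : ℕ} {d : EuclideanSpace ℝ (Fin n)} {ε : ℝ} (hε : 0 ≤ ε)
    (h : ∀ ℓ ∈ Icc 1 j, |Tb ℓ (fun _ => d) - T ℓ (fun _ => d)| ≤ ε) :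
    |taylorDecrement T j d - taylorDecrement Tb j d| ≤ 2 * ε := by
  rw [taylorDecrement_sub_taylorDecrement]
  calc |∑ ℓ ∈ Icc 1 j, (1 / (ℓ.factorial : ℝ)) * (Tb ℓ (fun _ => d) - T ℓ (fun _ => d))|
      ≤ ∑ ℓ ∈ Icc 1 j, (1 / (ℓ.factorial : ℝ)) * ε := by
        refine (abs_sum_le_sum_abs _ _).trans (sum_le_sum fun ℓ hℓ => ?_)
        rw [abs_mul, abs_of_nonneg (by positivity)]
        exact mul_le_mul_of_nonneg_left (h ℓ hℓ) (by positivity)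
    _ = (∑ ℓ ∈ Icc 1 j, (1 / (ℓ.factorial : ℝ))) * ε := (sum_mul _ _ _).symm
    _ ≤ 2 * ε := mul_le_mul_of_nonneg_right (sum_Icc_one_inv_factorial_le_two j) hε

theorem continuous_taylorDecrement (j : ℕ) : Continuous (taylorDecrement T j) := by
  unfold taylorDecrement
  fun_prop

theorem taylorDecrement_le_optimalityMeasure {j : ℕ} {δ : ℝ} {d : EuclideanSpace ℝ (Fin n)}
    (hd : ‖d‖ ≤ δ) : taylorDecrement T j d ≤ optimalityMeasure T j δ := by
  have hbdd : BddAbove {x : ℝ | ∃ d : EuclideanSpace ℝ (Fin n), ‖d‖ ≤ δ ∧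
      x = taylorDecrement T j d} := by
    refine ((isCompact_closedBall 0 δ).image (continuous_taylorDecrement T j)).bddAbove.mono ?_
    rintro x ⟨d, hd, rfl⟩
    exact ⟨d, mem_closedBall_zero_iff.mpr hd, rfl⟩
  exact le_csSup hbdd ⟨d, hd, rfl⟩

end TaylorDecrement

theorem exact_measure_le_of_accurate_general
    (n q : ℕ)
    (T Tb : ∀ ℓ : ℕ, ContinuousMultilinearMap ℝ (fun _ : Fin ℓ => EuclideanSpace ℝ (Fin n)) ℝ)
    (j : ℕ) (hj : j ∈ Finset.Icc 1 q)
    (δ ν ς : ℝ) (hν : 0 < ν) (hς : 0 < ς)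
    (dhat : EuclideanSpace ℝ (Fin n)) (hdhat : ‖dhat‖ ≤ δ)
    (hmax : taylorDecrement T j dhat = optimalityMeasure T j δ)
    (d : EuclideanSpace ℝ (Fin n))
    (hdec : ς * optimalityMeasure Tb j δ ≤ taylorDecrement Tb j d)
    (herr : ∀ ℓ ∈ Finset.Icc 1 j,
      |Tb ℓ (fun _ => dhat) - T ℓ (fun _ => dhat)| ≤ (ν / 2) * taylorDecrement Tb j dhat) :
    optimalityMeasure T j δ ≤ ((1 + ν) / ς) * taylorDecrement Tb j d := by
  have hε : 0 ≤ (ν / 2) * taylorDecrement Tb j dhat :=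
    (abs_nonneg _).trans (herr 1 (mem_Icc.mpr ⟨le_rfl, (mem_Icc.mp hj).1⟩))
  have hclose : taylorDecrement T j dhat ≤ (1 + ν) * taylorDecrement Tb j dhat := by
    have := (le_abs_self _).trans (abs_taylorDecrement_sub_le T Tb hε herr)
    linarith
  have hφb : optimalityMeasure Tb j δ ≤ taylorDecrement Tb j d / ς := by
    rw [le_div_iff₀ hς, mul_comm]
    exact hdec
  calc optimalityMeasure T j δ = taylorDecrement T j dhat := hmax.symm
    _ ≤ (1 + ν) * taylorDecrement Tb j dhat := hclose
    _ ≤ (1 + ν) * optimalityMeasure Tb j δ :=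
      mul_le_mul_of_nonneg_left (taylorDecrement_le_optimalityMeasure Tb hdhat) (by linarith)
    _ ≤ (1 + ν) * (taylorDecrement Tb j d / ς) :=
      mul_le_mul_of_nonneg_left hφb (by linarith)
    _ = ((1 + ν) / ς) * taylorDecrement Tb j d := by ring

/-- Lemma 2.2, first conclusion: if the inexact tensors are accurate along the exact
maximizer `d̂`, then the exact optimality measure `φ_j^δ` is controlled by the inexact
Taylor decrement at the approximate maximizer `d`. -/
theorem exact_measure_le_of_accurate
    (n q : ℕ) (hn : 1 ≤ n) (hq : 1 ≤ q)
    (T Tb : ∀ ℓ : ℕ, ContinuousMultilinearMap ℝ (fun _ : Fin ℓ => EuclideanSpace ℝ (Fin n)) ℝ)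
    (j : ℕ) (hj : j ∈ Finset.Icc 1 q)
    (δ ν ς : ℝ) (hδ : 0 < δ) (hν : 0 < ν) (hς : 0 < ς) (hς1 : ς ≤ 1)
    (dhat : EuclideanSpace ℝ (Fin n)) (hdhat : ‖dhat‖ ≤ δ)
    (hmax : taylorDecrement T j dhat = optimalityMeasure T j δ)
    (d : EuclideanSpace ℝ (Fin n)) (hd : ‖d‖ ≤ δ)
    (hdec : ς * optimalityMeasure Tb j δ ≤ taylorDecrement Tb j d)
    (herr : ∀ ℓ ∈ Finset.Icc 1 j,
      |Tb ℓ (fun _ => dhat) - T ℓ (fun _ => dhat)| ≤ (ν / 2) * taylorDecrement Tb j dhat) :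
    optimalityMeasure T j δ ≤ ((1 + ν) / ς) * taylorDecrement Tb j d :=
  exact_measure_le_of_accurate_general n q T Tb j hj δ ν ς hν hς dhat hdhat hmax d hdec herr
end

section
/- Let κ > 0 and b > 0 satisfy √b > (4/3)·κ, and set τ* = 8κ²/(√b − (4/3)·κ). Then τ²·b/(4κ·(2κ + τ/3)) ≥ √b·τ for every τ ≥ τ*, and consequently ∫₀^∞ exp(−τ²·b/(4κ·(2κ + τ/3))) dτ ≤ τ* + e^{−√b·τ*}/√b < ∞. -/
/-! For `τ ≥ τ*` the exponent dominates `√b·τ`: the inequality `τ(√b − 4κ/3) ≥ 8κ²` rearranges to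
`τ²b ≥ √b·τ·4κ(2κ + τ/3)`. Splitting `(0, ∞)` at `τ*`, the integrand is at most `1` on `(0, τ*]`
and at most `e^{−√b·τ}` on `(τ*, ∞)`, whose integral is `e^{−√b·τ*}/√b`. -/

open MeasureTheory Real Set

/-- The exponent `w₀(τ)` of the paper, with batch size `b` and uniform bound `κ`. -/
noncomputable def bernsteinExponent (κ b τ : ℝ) : ℝ := τ ^ 2 * b / (4 * κ * (2 * κ + τ / 3))

theorem measurable_bernsteinExponent (κ b : ℝ) : Measurable (bernsteinExponent κ b) := by
  unfold bernsteinExponent; fun_prop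

theorem bernsteinExponent_nonneg {κ b τ : ℝ} (hκ : 0 < κ) (hb : 0 ≤ b) (hτ : 0 ≤ τ) :
    0 ≤ bernsteinExponent κ b τ := by
  unfold bernsteinExponent; positivity

theorem sqrt_mul_le_bernsteinExponent {κ b τ : ℝ} (hκ : 0 < κ) (hsqrt : (4 / 3) * κ < √b)
    (hτ : 8 * κ ^ 2 / (√b - (4 / 3) * κ) ≤ τ) : √b * τ ≤ bernsteinExponent κ b τ := by
  have hs : 0 < √b := (by positivity : (0 : ℝ) < 4 / 3 * κ).trans hsqrt
  have hgap : 0 < √b - (4 / 3) * κ := sub_pos.mpr hsqrt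
  have hτpos : 0 < τ := (by positivity : (0 : ℝ) < 8 * κ ^ 2 / (√b - (4 / 3) * κ)).trans_le hτ
  have hkey : 8 * κ ^ 2 + 4 * κ * τ / 3 ≤ τ * √b := by
    have := (div_le_iff₀ hgap).mp hτ
    linarith
  unfold bernsteinExponent
  rw [le_div_iff₀ (by positivity)]
  calc √b * τ * (4 * κ * (2 * κ + τ / 3)) = √b * τ * (8 * κ ^ 2 + 4 * κ * τ / 3) := by ring
    _ ≤ √b * τ * (τ * √b) := by gcongr
    _ = τ ^ 2 * √b ^ 2 := by ring
    _ = τ ^ 2 * b := by rw [sq_sqrt (sqrt_pos.mp hs).le]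

section ExpNegTail

variable {g : ℝ → ℝ} {a c T : ℝ}

theorem integrableOn_Ioc_exp_neg_of_nonneg (hg : Measurable g) (hg0 : ∀ τ ∈ Ioc a T, 0 ≤ g τ) :
    IntegrableOn (fun τ => exp (-g τ)) (Ioc a T) := by
  refine Measure.integrableOn_of_bounded (M := 1) (by simp) (by fun_prop) ?_
  filter_upwards [ae_restrict_mem measurableSet_Ioc] with τ hτ
  rw [norm_of_nonneg (exp_pos _).le, exp_le_one_iff, neg_nonpos]
  exact hg0 τ hτ

theorem setIntegral_Ioc_exp_neg_le_of_nonneg (haT : a ≤ T) (hg0 : ∀ τ ∈ Ioc a T, 0 ≤ g τ) :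
    ∫ τ in Ioc a T, exp (-g τ) ≤ T - a := by
  have := norm_setIntegral_le_of_norm_le_const (μ := volume) (f := fun τ => exp (-g τ))
    (C := 1) (s := Ioc a T) (by simp) ?_
  · simpa [haT] using (le_abs_self _).trans this
  intro τ hτ
  rw [norm_of_nonneg (exp_pos _).le, exp_le_one_iff, neg_nonpos]
  exact hg0 τ hτ

theorem integrableOn_Ioi_exp_neg_of_mul_le (hg : Measurable g) (hc : 0 < c)
    (hlin : ∀ τ > T, c * τ ≤ g τ) : IntegrableOn (fun τ => exp (-g τ)) (Ioi T) := by
  refine (exp_neg_integrableOn_Ioi T hc).mono' (by fun_prop) ?_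
  filter_upwards [ae_restrict_mem measurableSet_Ioi] with τ hτ
  rw [norm_of_nonneg (exp_pos _).le, neg_mul, exp_le_exp, neg_le_neg_iff]
  exact hlin τ hτ

theorem setIntegral_Ioi_exp_neg_le_of_mul_le (hg : Measurable g) (hc : 0 < c)
    (hlin : ∀ τ > T, c * τ ≤ g τ) : ∫ τ in Ioi T, exp (-g τ) ≤ exp (-(c * T)) / c := by
  calc ∫ τ in Ioi T, exp (-g τ) ≤ ∫ τ in Ioi T, exp (-c * τ) := by
        refine setIntegral_mono_on (integrableOn_Ioi_exp_neg_of_mul_le hg hc hlin)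
          (exp_neg_integrableOn_Ioi T hc) measurableSet_Ioi fun τ hτ => ?_
        rw [neg_mul, exp_le_exp, neg_le_neg_iff]
        exact hlin τ hτ
    _ = exp (-(c * T)) / c := by
        rw [integral_exp_mul_Ioi (neg_lt_zero.mpr hc), neg_mul, div_neg, neg_div, neg_neg]

theorem integrableOn_Ioi_exp_neg_and_setIntegral_le (hg : Measurable g) (hc : 0 < c)
    (haT : a ≤ T) (hg0 : ∀ τ ∈ Ioc a T, 0 ≤ g τ) (hlin : ∀ τ > T, c * τ ≤ g τ) :
    IntegrableOn (fun τ => exp (-g τ)) (Ioi a) ∧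
      ∫ τ in Ioi a, exp (-g τ) ≤ T - a + exp (-(c * T)) / c := by
  have hIoc := integrableOn_Ioc_exp_neg_of_nonneg hg hg0
  have hIoi := integrableOn_Ioi_exp_neg_of_mul_le hg hc hlin
  rw [← Ioc_union_Ioi_eq_Ioi haT]
  refine ⟨hIoc.union hIoi, ?_⟩
  rw [setIntegral_union (Ioc_disjoint_Ioi le_rfl) measurableSet_Ioi hIoc hIoi]
  exact add_le_add (setIntegral_Ioc_exp_neg_le_of_nonneg haT hg0)
    (setIntegral_Ioi_exp_neg_le_of_mul_le hg hc hlin)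

end ExpNegTail

theorem bernstein_tail_integral_bound_general
    (κ b : ℝ) (hκ : 0 < κ)
    (hsqrt : Real.sqrt b > (4 / 3) * κ)
    (τs : ℝ) (hτs : τs = 8 * κ ^ 2 / (Real.sqrt b - (4 / 3) * κ)) :
    (∀ τ ≥ τs, τ ^ 2 * b / (4 * κ * (2 * κ + τ / 3)) ≥ Real.sqrt b * τ) ∧
    IntegrableOn (fun τ => Real.exp (-(τ ^ 2 * b / (4 * κ * (2 * κ + τ / 3)))))
      (Set.Ioi 0) ∧
    (∫ τ in Set.Ioi (0 : ℝ), Real.exp (-(τ ^ 2 * b / (4 * κ * (2 * κ + τ / 3)))))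
      ≤ τs + Real.exp (-(Real.sqrt b * τs)) / Real.sqrt b := by
  have hs : 0 < √b := (by positivity : (0 : ℝ) < 4 / 3 * κ).trans hsqrt
  have hτs0 : 0 ≤ τs := hτs ▸ div_nonneg (by positivity) (sub_pos.mpr hsqrt).le
  have htail : ∀ τ ≥ τs, √b * τ ≤ bernsteinExponent κ b τ := fun τ hτ =>
    sqrt_mul_le_bernsteinExponent hκ hsqrt (hτs ▸ hτ)
  have hnonneg : ∀ τ ∈ Ioc 0 τs, 0 ≤ bernsteinExponent κ b τ := fun τ hτ =>
    bernsteinExponent_nonneg hκ (sqrt_pos.mp hs).le hτ.1.le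
  obtain ⟨hint, hbound⟩ := integrableOn_Ioi_exp_neg_and_setIntegral_le
    (measurable_bernsteinExponent κ b) hs hτs0 hnonneg fun τ hτ => htail τ hτ.le
  rw [sub_zero] at hbound
  exact ⟨htail, hint, hbound⟩

/-- The bound (4.28) of the paper: finiteness of `∫₀^∞ e^{-w₀(τ)} dτ` for the Bernstein
exponent `w₀(τ) = τ²b/(4κ(2κ + τ/3))`, with the explicit bound `τ* + e^{-√b·τ*}/√b`. -/
theorem bernstein_tail_integral_bound
    (κ b : ℝ) (hκ : 0 < κ) (hb : 0 < b)
    (hsqrt : Real.sqrt b > (4 / 3) * κ)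
    (τs : ℝ) (hτs : τs = 8 * κ ^ 2 / (Real.sqrt b - (4 / 3) * κ)) :
    (∀ τ ≥ τs, τ ^ 2 * b / (4 * κ * (2 * κ + τ / 3)) ≥ Real.sqrt b * τ) ∧
    IntegrableOn (fun τ => Real.exp (-(τ ^ 2 * b / (4 * κ * (2 * κ + τ / 3)))))
      (Set.Ioi 0) ∧
    (∫ τ in Set.Ioi (0 : ℝ), Real.exp (-(τ ^ 2 * b / (4 * κ * (2 * κ + τ / 3)))))
      ≤ τs + Real.exp (-(Real.sqrt b * τs)) / Real.sqrt b :=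
  bernstein_tail_integral_bound_general κ b hκ hsqrt τs hτs
end

section
/- Let η ∈ (0,1), set ν = min(η/2, (1−η)/4), let ς ∈ (0,1], ε_min ∈ (0,1], and κ_r = ς·(1−η)/(4·(1+ν)·ϑ_f). Let j ∈ {1,…,q}, let 0 < r ≤ κ_r·ε_min, and let s ∈ ℝⁿ with ‖s‖ ≤ r. Assume that: (a) Δt̄_j(s) ≥ φ̂·r^j/j! for some real φ̂ > ς·ε_min/(1+ν); (b) |Δt_{f,j}(x,s) − Δt̄_j(s)| ≤ ν·Δt̄_j(s); and (c) |(f(x) − f(x+s)) − Δ̄| ≤ 2ν·Δt̄_j(s), where Δ̄ ∈ ℝ is the inexact function-value decrease. Then Δ̄ ≥ η·Δt̄_j(s), i.e. the trust-region acceptance ratio ρ = Δ̄/Δt̄_j(s) satisfies ρ ≥ η (the iteration is successful). -/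
/-!
Along the segment `t ↦ x + t • s`, the order-`j` Taylor remainder of a function whose `j`-th
derivative is `L`-Lipschitz is at most `L ‖s‖^(j+1) / (j+1)!`: by induction on `j`, the
remainder's derivative is the order-`(j-1)` remainder of the derivative, and the fencing
lemma integrates the bound `K t^j / j!` to `K t^(j+1) / (j+1)!`.
For `r ≤ κ_r ε_min`, the lower bound (a) on `Δt̄_j(s)` makes this remainder at most
`(1-η)/4 · Δt̄_j(s)`. Combined with (b) and (c) this gives
`Δ̄ ≥ (1 - 3ν - (1-η)/4) Δt̄_j(s) ≥ η Δt̄_j(s)`, since `ν ≤ (1-η)/4`.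
-/

open scoped BigOperators

open Finset
open scoped Nat

theorem hasDerivAt_pow_succ_div_factorial (k : ℕ) (t : ℝ) :
    HasDerivAt (fun t : ℝ => t ^ (k + 1) / (k + 1)!) (t ^ k / k !) t := by
  refine ((hasDerivAt_pow (k + 1) t).div_const ((k + 1)! : ℝ)).congr_deriv ?_
  rw [Nat.factorial_succ, Nat.cast_mul, Nat.add_sub_cancel, mul_div_mul_left _ _ (by positivity)]

theorem pow_succ_div_factorial_succ_le {r : ℝ} (hr : 0 ≤ r) (j : ℕ) :
    r ^ (j + 1) / (j + 1)! ≤ r * (r ^ j / j !) := by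
  rw [pow_succ', mul_div_assoc]
  gcongr
  exact j.le_succ

theorem mul_pow_succ_div_factorial_le_of_mul_le {ϑ r a b D : ℝ} {j : ℕ} (hϑ : 0 ≤ ϑ)
    (hr : 0 ≤ r) (ha : 0 ≤ a) (hϑr : ϑ * r ≤ a * b) (hD : b * (r ^ j / j !) ≤ D) :
    ϑ * r ^ (j + 1) / (j + 1)! ≤ a * D := by
  calc ϑ * r ^ (j + 1) / (j + 1)! ≤ ϑ * r * (r ^ j / j !) := by
        rw [mul_div_assoc, mul_assoc]
        gcongr
        exact pow_succ_div_factorial_succ_le hr j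
    _ ≤ a * b * (r ^ j / j !) := by gcongr
    _ ≤ a * D := by rw [mul_assoc]; gcongr

theorem mul_le_of_decrement_errors_le {η ν D Δexact Δbar y₀ y₁ : ℝ} (hν : ν ≤ (1 - η) / 4)
    (hD : 0 ≤ D) (hb : |Δexact - D| ≤ ν * D) (hc : |(y₀ - y₁) - Δbar| ≤ 2 * ν * D)
    (hE : |y₁ - (y₀ - Δexact)| ≤ (1 - η) / 4 * D) :
    η * D ≤ Δbar := by
  have := abs_le.mp hb
  have := abs_le.mp hc
  have := abs_le.mp hE
  nlinarith [mul_nonneg (sub_nonneg.2 hν) hD]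

section

variable {E F : Type*} [NormedAddCommGroup E] [NormedSpace ℝ E] [NormedAddCommGroup F]
  [NormedSpace ℝ F]

theorem hasDerivAt_sum_pow_div_factorial_smul (c : ℕ → F) (m : ℕ) (t : ℝ) :
    HasDerivAt (fun t : ℝ => ∑ ℓ ∈ range (m + 1), (t ^ ℓ / ℓ !) • c ℓ)
      (∑ ℓ ∈ range m, (t ^ ℓ / ℓ !) • c (ℓ + 1)) t := by
  have h := HasDerivAt.fun_sum (u := range m) fun ℓ _ =>
    (hasDerivAt_pow_succ_div_factorial ℓ t).smul_const (c (ℓ + 1))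
  simp_rw [sum_range_succ' _ m]
  simpa using h.add_const (c 0)

theorem norm_sub_taylor_le_of_lipschitz_iteratedDeriv {j : ℕ} {g : ℝ → F} (hg : ContDiff ℝ j g)
    {K : ℝ} (hK : ∀ t, 0 ≤ t → ‖iteratedDeriv j g t - iteratedDeriv j g 0‖ ≤ K * t)
    {t : ℝ} (ht : 0 ≤ t) :
    ‖g t - ∑ ℓ ∈ range (j + 1), (t ^ ℓ / ℓ !) • iteratedDeriv ℓ g 0‖
      ≤ K * t ^ (j + 1) / (j + 1)! := by
  induction j generalizing g t with
  | zero => simpa using hK t ht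
  | succ j ih =>
    set h : ℝ → F := fun t => g t - ∑ ℓ ∈ range (j + 2), (t ^ ℓ / ℓ !) • iteratedDeriv ℓ g 0
    have hderiv (u : ℝ) : HasDerivAt h
        (deriv g u - ∑ ℓ ∈ range (j + 1), (u ^ ℓ / ℓ !) • iteratedDeriv ℓ (deriv g) 0) u := by
      simp_rw [← iteratedDeriv_succ']
      exact ((hg.differentiable (by simp)) u).hasDerivAt.sub
        (hasDerivAt_sum_pow_div_factorial_smul _ _ u)
    have hB (u : ℝ) : HasDerivAt (fun u => K * (u ^ (j + 2) / (j + 2)!))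
        (K * (u ^ (j + 1) / (j + 1)!)) u :=
      (hasDerivAt_pow_succ_div_factorial (j + 1) u).const_mul K
    have h0 : ‖h 0‖ ≤ K * (0 ^ (j + 2) / (j + 2)!) := by
      simp [h, sum_range_succ']
    have := image_norm_le_of_norm_deriv_right_le_deriv_boundary
      (fun u _ => (hderiv u).continuousAt.continuousWithinAt)
      (fun u _ => (hderiv u).hasDerivWithinAt) h0 hB (fun u hu => ?_) ⟨ht, le_rfl⟩
    · simpa [h, mul_div_assoc] using this
    · rw [← mul_div_assoc]
      exact ih hg.deriv' (by simpa only [iteratedDeriv_succ'] using hK) hu.1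

theorem iteratedDeriv_comp_add_smul {m : WithTop ℕ∞} {f : E → F} (hf : ContDiff ℝ m f) (x s : E)
    (t : ℝ) {n : ℕ} (hn : n ≤ m) :
    iteratedDeriv n (fun t : ℝ => f (x + t • s)) t
      = iteratedFDeriv ℝ n f (x + t • s) (fun _ => s) := by
  have hfx : ContDiff ℝ m (fun z => f (x + z)) := hf.comp (contDiff_const.add contDiff_id)
  have := (ContinuousLinearMap.toSpanSingleton ℝ s).iteratedFDeriv_comp_right hfx t hn
  simp only [Function.comp_def, ContinuousLinearMap.toSpanSingleton_apply] at this
  rw [iteratedDeriv_eq_iteratedFDeriv, this]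
  simp only [iteratedFDeriv_comp_add_left, ContinuousMultilinearMap.compContinuousLinearMap_apply,
    ContinuousLinearMap.toSpanSingleton_apply, one_smul]

theorem norm_sub_taylor_le_of_lipschitz_iteratedFDeriv {j : ℕ} {f : E → F} (hf : ContDiff ℝ j f)
    {L : ℝ} {x : E} (hL : ∀ y, ‖iteratedFDeriv ℝ j f y - iteratedFDeriv ℝ j f x‖ ≤ L * ‖y - x‖)
    (s : E) :
    ‖f (x + s) - ∑ ℓ ∈ range (j + 1), (1 / ℓ ! : ℝ) • iteratedFDeriv ℝ ℓ f x (fun _ => s)‖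
      ≤ L * ‖s‖ ^ (j + 1) / (j + 1)! := by
  have hg : ContDiff ℝ j (fun t : ℝ => f (x + t • s)) :=
    hf.comp (contDiff_const.add (contDiff_id.smul contDiff_const))
  have hK (t : ℝ) (ht : 0 ≤ t) :
      ‖iteratedDeriv j (fun t : ℝ => f (x + t • s)) t - iteratedDeriv j (fun t : ℝ => f (x + t • s)) 0‖
        ≤ L * ‖s‖ ^ (j + 1) * t := by
    rw [iteratedDeriv_comp_add_smul hf x s t le_rfl, iteratedDeriv_comp_add_smul hf x s 0 le_rfl,
      zero_smul, add_zero, ← sub_apply]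
    calc _ ≤ ‖iteratedFDeriv ℝ j f (x + t • s) - iteratedFDeriv ℝ j f x‖ * ‖s‖ ^ j :=
          ContinuousMultilinearMap.le_opNorm_mul_pow_of_le _ (pi_norm_const_le s)
      _ ≤ L * ‖t • s‖ * ‖s‖ ^ j := by
          gcongr
          simpa using hL (x + t • s)
      _ = L * ‖s‖ ^ (j + 1) * t := by
          rw [norm_smul, Real.norm_of_nonneg ht]
          ring
  have hcoeff (ℓ : ℕ) (hℓ : ℓ ∈ range (j + 1)) :
      (1 ^ ℓ / ℓ ! : ℝ) • iteratedDeriv ℓ (fun t : ℝ => f (x + t • s)) 0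
        = (1 / ℓ ! : ℝ) • iteratedFDeriv ℝ ℓ f x (fun _ => s) := by
    rw [iteratedDeriv_comp_add_smul hf x s 0 (mod_cast Nat.lt_succ_iff.mp (mem_range.mp hℓ)),
      zero_smul, add_zero, one_pow]
  have := norm_sub_taylor_le_of_lipschitz_iteratedDeriv hg hK zero_le_one
  rwa [sum_congr rfl hcoeff, one_smul, one_pow, mul_one] at this
end

theorem successful_iteration_of_small_radius_general
    (n q : ℕ)
    (f : EuclideanSpace ℝ (Fin n) → ℝ) (hf : ContDiff ℝ q f)
    (ϑf : ℝ) (hϑf : 1 ≤ ϑf)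
    (hlip : ∀ j ∈ Finset.Icc 1 q, ∀ x y : EuclideanSpace ℝ (Fin n),
      ‖iteratedFDeriv ℝ j f x - iteratedFDeriv ℝ j f y‖ ≤ ϑf * ‖x - y‖)
    (Tb : ∀ ℓ : ℕ, ContinuousMultilinearMap ℝ (fun _ : Fin ℓ => EuclideanSpace ℝ (Fin n)) ℝ)
    (η ν ς εmin κr : ℝ)
    (hη : 0 < η) (hη1 : η < 1)
    (hν : ν = min (η / 2) ((1 - η) / 4))
    (hκr : κr = ς * (1 - η) / (4 * (1 + ν) * ϑf))
    (j : ℕ) (hj : j ∈ Finset.Icc 1 q)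
    (x s : EuclideanSpace ℝ (Fin n)) (r : ℝ)
    (hrκ : r ≤ κr * εmin) (hs : ‖s‖ ≤ r)
    (φhat : ℝ) (hφhat : φhat > ς * εmin / (1 + ν))
    (ha : taylorDecrement Tb j s ≥ φhat * r ^ j / (Nat.factorial j : ℝ))
    (Δexact : ℝ)
    (hΔexact : Δexact =
      -∑ ℓ ∈ Finset.Icc 1 j,
        (1 / (Nat.factorial ℓ : ℝ)) * iteratedFDeriv ℝ ℓ f x (fun _ => s))
    (hb : |Δexact - taylorDecrement Tb j s| ≤ ν * taylorDecrement Tb j s)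
    (Δbar : ℝ)
    (hc : |(f x - f (x + s)) - Δbar| ≤ 2 * ν * taylorDecrement Tb j s) :
    Δbar ≥ η * taylorDecrement Tb j s := by
  obtain ⟨-, hjq⟩ := Finset.mem_Icc.mp hj
  have hν_pos : 0 < ν := hν ▸ lt_min (by linarith) (by linarith)
  have hν_le : ν ≤ (1 - η) / 4 := hν ▸ min_le_right _ _
  have hr : 0 ≤ r := (norm_nonneg s).trans hs
  have hϑr : ϑf * r ≤ (1 - η) / 4 * (ς * εmin / (1 + ν)) := by
    have hκ : κr * εmin = (1 - η) / 4 * (ς * εmin / (1 + ν)) / ϑf := by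
      rw [hκr]
      field_simp
    rwa [hκ, le_div_iff₀' (by linarith)] at hrκ
  have hD_lower : ς * εmin / (1 + ν) * (r ^ j / j !) ≤ taylorDecrement Tb j s := by
    rw [← mul_div_assoc]
    exact le_trans (by gcongr) ha
  have hsum : ∑ ℓ ∈ range (j + 1), (1 / ℓ ! : ℝ) • iteratedFDeriv ℝ ℓ f x (fun _ => s)
      = f x - Δexact := by
    rw [sum_range_eq_add_Ico _ j.add_one_pos, Ico_add_one_right_eq_Icc, hΔexact]
    simp [iteratedFDeriv_zero_apply]
  have htaylor := norm_sub_taylor_le_of_lipschitz_iteratedFDeriv (hf.of_le (mod_cast hjq))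
    (fun y => hlip j hj y x) s
  rw [hsum, Real.norm_eq_abs] at htaylor
  refine mul_le_of_decrement_errors_le hν_le
    (nonneg_of_mul_nonneg_right ((abs_nonneg _).trans hb) hν_pos) hb hc (htaylor.trans ?_)
  calc ϑf * ‖s‖ ^ (j + 1) / (j + 1)! ≤ ϑf * r ^ (j + 1) / (j + 1)! := by gcongr
    _ ≤ (1 - η) / 4 * taylorDecrement Tb j s :=
      mul_pow_succ_div_factorial_le_of_mul_le (by linarith) hr (by linarith) hϑr hD_lower

/-- Lemma 3.2 of the paper: under the accuracy events and a sufficiently small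
trust-region radius `r ≤ κ_r·ε_min`, the iteration is successful, i.e. the inexact
function decrease `Δ̄` satisfies `Δ̄ ≥ η·Δt̄_j(s)`. -/
theorem successful_iteration_of_small_radius
    (n q : ℕ) (hn : 1 ≤ n) (hq : 1 ≤ q)
    (f : EuclideanSpace ℝ (Fin n) → ℝ) (hf : ContDiff ℝ q f)
    (ϑf : ℝ) (hϑf : 1 ≤ ϑf)
    (hlip : ∀ j ∈ Finset.Icc 1 q, ∀ x y : EuclideanSpace ℝ (Fin n),
      ‖iteratedFDeriv ℝ j f x - iteratedFDeriv ℝ j f y‖ ≤ ϑf * ‖x - y‖)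
    (Tb : ∀ ℓ : ℕ, ContinuousMultilinearMap ℝ (fun _ : Fin ℓ => EuclideanSpace ℝ (Fin n)) ℝ)
    (η ν ς εmin κr : ℝ)
    (hη : 0 < η) (hη1 : η < 1)
    (hν : ν = min (η / 2) ((1 - η) / 4))
    (hς : 0 < ς) (hς1 : ς ≤ 1) (hεmin : 0 < εmin) (hεmin1 : εmin ≤ 1)
    (hκr : κr = ς * (1 - η) / (4 * (1 + ν) * ϑf))
    (j : ℕ) (hj : j ∈ Finset.Icc 1 q)
    (x s : EuclideanSpace ℝ (Fin n)) (r : ℝ)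
    (hr0 : 0 < r) (hrκ : r ≤ κr * εmin) (hs : ‖s‖ ≤ r)
    (φhat : ℝ) (hφhat : φhat > ς * εmin / (1 + ν))
    (ha : taylorDecrement Tb j s ≥ φhat * r ^ j / (Nat.factorial j : ℝ))
    (Δexact : ℝ)
    (hΔexact : Δexact =
      -∑ ℓ ∈ Finset.Icc 1 j,
        (1 / (Nat.factorial ℓ : ℝ)) * iteratedFDeriv ℝ ℓ f x (fun _ => s))
    (hb : |Δexact - taylorDecrement Tb j s| ≤ ν * taylorDecrement Tb j s)
    (Δbar : ℝ)
    (hc : |(f x - f (x + s)) - Δbar| ≤ 2 * ν * taylorDecrement Tb j s) :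
    Δbar ≥ η * taylorDecrement Tb j s :=
  successful_iteration_of_small_radius_general n q f hf ϑf hϑf hlip Tb η ν ς εmin κr hη hη1 hν hκr j
    hj x s r hrκ hs φhat hφhat ha Δexact hΔexact hb Δbar hc
end

section
/- Given constants γ > 1 and r_max > 0, an initial radius r_0 ∈ (0, r_max], and a set S ⊆ ℕ of 'successful' iteration indices, define the trust-region radius sequence (r_k)_{k∈ℕ} by r_{k+1} = min(r_max, γ·r_k) if k ∈ S and r_{k+1} = r_k/γ if k ∉ S. If 0 < r̄ < r_0, then for every ℓ ∈ ℕ the number of indices k ∈ {0,…,ℓ} with r_k ≤ r̄ and k ∈ S is at most (ℓ+1)/2. -/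
open scoped Classical

/-!
Let `N n` count the small successful iterations `k < n` and `M n` the unsuccessful ones. The
invariant `r̄ γ ^ N n < γ ^ M n r n`, `N n ≤ M n` survives every step: an unsuccessful step divides
the radius by `γ` and raises `M`; a successful step multiplies it by `γ` unless the cap `r_max > r̄`
bites, which keeps it above the level anyway once `N ≤ M`. At a small successful step the
invariant forces `N < M`, so `N ≤ M` persists, and `2 N ≤ N + M ≤ ℓ + 1`.
-/

theorem Nat.count_add_count_not (p : ℕ → Prop) [DecidablePred p] (n : ℕ) :
    Nat.count p n + Nat.count (fun k => ¬ p k) n = n := by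
  induction n with
  | zero => simp
  | succ n ih => rw [Nat.count_succ, Nat.count_succ]; split_ifs <;> omega

section RadiusUpdate

variable {γ rmax rbar ρ : ℝ} {N M : ℕ}

lemma lt_of_mul_pow_lt_pow_mul_of_le (hγ : 1 < γ) (hrbar : 0 < rbar)
    (h : rbar * γ ^ N < γ ^ M * ρ) (hρ : ρ ≤ rbar) : N < M := by
  have : rbar * γ ^ N < rbar * γ ^ M := by
    calc rbar * γ ^ N < γ ^ M * ρ := h
      _ ≤ γ ^ M * rbar := by gcongr
      _ = rbar * γ ^ M := mul_comm _ _
  exact (pow_lt_pow_iff_right₀ hγ).mp (lt_of_mul_lt_mul_left this hrbar.le)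

lemma mul_pow_lt_pow_mul_min {N' : ℕ} (hγ : 1 ≤ γ) (hrbar : 0 ≤ rbar) (hrmax : rbar < rmax)
    (h : rbar * γ ^ N < γ ^ M * ρ) (hN' : N' ≤ N + 1) (hN'M : N' ≤ M) :
    rbar * γ ^ N' < γ ^ M * min rmax (γ * ρ) := by
  have hγM : 0 < γ ^ M := by positivity
  rw [mul_min_of_nonneg _ _ hγM.le]
  refine lt_min ?_ ?_
  · calc rbar * γ ^ N' ≤ rbar * γ ^ M := by gcongr
      _ < rmax * γ ^ M := by gcongr
      _ = γ ^ M * rmax := mul_comm _ _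
  · calc rbar * γ ^ N' ≤ rbar * γ ^ (N + 1) := by gcongr
      _ = γ * (rbar * γ ^ N) := by ring
      _ < γ * (γ ^ M * ρ) := by gcongr
      _ = γ ^ M * (γ * ρ) := by ring

lemma pow_succ_mul_div_self (hγ : γ ≠ 0) : γ ^ (M + 1) * (ρ / γ) = γ ^ M * ρ := by
  field_simp
  ring

variable {S : ℕ → Prop} {r : ℕ → ℝ}

lemma radius_invariant (hγ : 1 < γ) (hrbar : 0 < rbar) (hrmax : rbar < rmax) (hr0 : rbar < r 0)
    (hrec : ∀ k, r (k + 1) = if S k then min rmax (γ * r k) else r k / γ) (n : ℕ) :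
    rbar * γ ^ Nat.count (fun k => r k ≤ rbar ∧ S k) n < γ ^ Nat.count (fun k => ¬ S k) n * r n ∧
      Nat.count (fun k => r k ≤ rbar ∧ S k) n ≤ Nat.count (fun k => ¬ S k) n := by
  induction n with
  | zero => simpa using hr0
  | succ n ih =>
    obtain ⟨hlevel, hNM⟩ := ih
    rw [Nat.count_succ, Nat.count_succ, hrec]
    by_cases hS : S n
    · simp only [hS, and_true, not_true_eq_false, if_true, if_false, add_zero]
      have hN'M : Nat.count (fun k => r k ≤ rbar ∧ S k) n + (if r n ≤ rbar then 1 else 0) ≤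
          Nat.count (fun k => ¬ S k) n := by
        by_cases hsmall : r n ≤ rbar
        · simpa [hsmall] using lt_of_mul_pow_lt_pow_mul_of_le hγ hrbar hlevel hsmall
        · simpa [hsmall] using hNM
      exact ⟨mul_pow_lt_pow_mul_min hγ.le hrbar.le hrmax hlevel (by split_ifs <;> omega) hN'M,
        hN'M⟩
    · simp only [hS, and_false, not_false_eq_true, if_true, if_false, add_zero]
      rw [pow_succ_mul_div_self (by positivity)]
      exact ⟨hlevel, hNM.trans (Nat.le_succ _)⟩

end RadiusUpdate

theorem count_small_successful_le_half_general
    (γ rmax r0 rbar : ℝ)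
    (hγ : 1 < γ) (hr0max : r0 ≤ rmax)
    (S : ℕ → Prop) (r : ℕ → ℝ)
    (hinit : r 0 = r0)
    (hrec : ∀ k, r (k + 1) = if S k then min rmax (γ * r k) else r k / γ)
    (hrbar : 0 < rbar) (hrbarlt : rbar < r0) :
    ∀ ℓ : ℕ,
      (((Finset.range (ℓ + 1)).filter (fun k => r k ≤ rbar ∧ S k)).card : ℝ)
        ≤ (ℓ + 1) / 2 := by
  intro ℓ
  have hrbarmax : rbar < rmax := hrbarlt.trans_le hr0max
  obtain ⟨-, hsmall_le_unsucc⟩ :=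
    radius_invariant hγ hrbar hrbarmax (hinit ▸ hrbarlt) hrec (ℓ + 1)
  have hsmall_le_succ : Nat.count (fun k => r k ≤ rbar ∧ S k) (ℓ + 1) ≤ Nat.count S (ℓ + 1) :=
    Nat.count_mono_left fun _ _ hk => hk.2
  have hpartition := Nat.count_add_count_not S (ℓ + 1)
  rw [← Nat.count_eq_card_filter_range, le_div_iff₀ two_pos]
  exact_mod_cast (by omega : Nat.count (fun k => r k ≤ rbar ∧ S k) (ℓ + 1) * 2 ≤ ℓ + 1)

/-- The deterministic counting inequality (3.19): among the first `ℓ+1` iterations of a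
trust-region radius update, at most `(ℓ+1)/2` can be successful iterations with radius
at most `r̄ < r₀`. -/
theorem count_small_successful_le_half
    (γ rmax r0 rbar : ℝ)
    (hγ : 1 < γ) (hrmax : 0 < rmax) (hr0 : 0 < r0) (hr0max : r0 ≤ rmax)
    (S : ℕ → Prop) (r : ℕ → ℝ)
    (hinit : r 0 = r0)
    (hrec : ∀ k, r (k + 1) = if S k then min rmax (γ * r k) else r k / γ)
    (hrbar : 0 < rbar) (hrbarlt : rbar < r0) :
    ∀ ℓ : ℕ,
      (((Finset.range (ℓ + 1)).filter (fun k => r k ≤ rbar ∧ S k)).card : ℝ)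
        ≤ (ℓ + 1) / 2 :=
  count_small_successful_le_half_general γ rmax r0 rbar hγ hr0max S r hinit hrec hrbar hrbarlt
end

section
/- Work on a probability space (Ω, 𝒜, P) equipped with a filtration (ℱ_k)_{k∈ℕ} of sub-σ-algebras of 𝒜, and let p ∈ [0,1]. For each k ∈ ℕ let W_k be a {0,1}-valued ℱ_k-measurable random variable and let E_k ∈ 𝒜 be an event with P[E_k | ℱ_k] ≥ p almost surely. Let N : Ω → ℕ ∪ {∞} satisfy {k < N} ∈ ℱ_k for every k ∈ ℕ. Then E[Σ_{k<N} W_k·1_{E_k}] ≥ p·E[Σ_{k<N} W_k], where sums and expectations of nonnegative quantities take values in [0,∞]. -/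
open MeasureTheory
open scoped ENNReal

/-!
Since `W k ∈ {0,1}`, the `k`-th summand on the left is the indicator of
`A k = {k < N} ∩ {W k = 1}`, an `ℱ k`-measurable event, and the one on the right is the
indicator of `A k ∩ E k`. Integrating the bound `p ≤ P[E k | ℱ k]` over `A k` gives
`p · P(A k) ≤ P(A k ∩ E k)`, and summing over `k` gives the theorem.
-/

lemma ofReal_mul_measure_le_measure_inter_of_le_condExp_indicator
    {Ω : Type*} {m mΩ : MeasurableSpace Ω} {μ : Measure Ω} [IsFiniteMeasure μ] (hm : m ≤ mΩ)
    {p : ℝ} {A E : Set Ω} (hA : MeasurableSet[m] A) (hE : MeasurableSet E)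
    (hpE : ∀ᵐ ω ∂μ, p ≤ (μ[E.indicator (fun _ => (1 : ℝ)) | m]) ω) :
    ENNReal.ofReal p * μ A ≤ μ (A ∩ E) := by
  have hint : Integrable (E.indicator fun _ => (1 : ℝ)) μ := (integrable_const 1).indicator hE
  calc ENNReal.ofReal p * μ A = ENNReal.ofReal (∫ _ in A, p ∂μ) := by
        rw [setIntegral_const, smul_eq_mul, mul_comm (μ.real A),
          ENNReal.ofReal_mul' measureReal_nonneg, ofReal_measureReal]
    _ ≤ ENNReal.ofReal (∫ ω in A, (μ[E.indicator (fun _ => (1 : ℝ)) | m]) ω ∂μ) :=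
        ENNReal.ofReal_le_ofReal <| setIntegral_mono_ae (integrable_const p).integrableOn
          integrable_condExp.integrableOn hpE
    _ = ENNReal.ofReal (∫ ω in A, E.indicator (fun _ => (1 : ℝ)) ω ∂μ) := by
        rw [setIntegral_condExp hm hint hA]
    _ = μ (A ∩ E) := by
        rw [setIntegral_indicator hE, setIntegral_const, smul_eq_mul, mul_one, ofReal_measureReal]

lemma ofReal_eq_indicator_preimage_one {Ω : Type*} {f : Ω → ℝ} (hf : ∀ ω, f ω = 0 ∨ f ω = 1)
    (ω : Ω) : ENNReal.ofReal (f ω) = (f ⁻¹' {1}).indicator 1 ω := by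
  rcases hf ω with h | h <;> simp [h]

lemma lintegral_tsum_indicator_one {Ω ι : Type*} [Countable ι] {mΩ : MeasurableSpace Ω}
    {μ : Measure Ω} {s : ι → Set Ω} (hs : ∀ k, MeasurableSet (s k)) :
    ∫⁻ ω, ∑' k, (s k).indicator 1 ω ∂μ = ∑' k, μ (s k) := by
  rw [lintegral_tsum fun k => (measurable_one.indicator (hs k)).aemeasurable]
  simp_rw [lintegral_indicator_one (hs _)]

theorem expected_weighted_accurate_ge_general
    {Ω : Type*} {mΩ : MeasurableSpace Ω} (μ : Measure Ω) [IsProbabilityMeasure μ]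
    (ℱ : Filtration ℕ mΩ) (p : ℝ)
    (W : ℕ → Ω → ℝ)
    (hW01 : ∀ k ω, W k ω = 0 ∨ W k ω = 1)
    (hWmeas : ∀ k, Measurable[ℱ k] (W k))
    (E : ℕ → Set Ω) (hE : ∀ k, MeasurableSet (E k))
    (hEp : ∀ k, ∀ᵐ ω ∂μ,
      p ≤ (μ[(E k).indicator (fun _ => (1 : ℝ)) | ℱ k]) ω)
    (N : Ω → ℕ∞)
    (hN : ∀ k, MeasurableSet[ℱ k] {ω | (k : ℕ∞) < N ω}) :
    ENNReal.ofReal p *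
        ∫⁻ ω, ∑' (k : ℕ), ({ω' | (k : ℕ∞) < N ω'}.indicator (fun _ => (1 : ℝ≥0∞)) ω) *
          ENNReal.ofReal (W k ω) ∂μ
      ≤ ∫⁻ ω, ∑' (k : ℕ), ({ω' | (k : ℕ∞) < N ω'}.indicator (fun _ => (1 : ℝ≥0∞)) ω) *
          ENNReal.ofReal (W k ω) * ((E k).indicator (fun _ => (1 : ℝ≥0∞)) ω) ∂μ := by
  set A : ℕ → Set Ω := fun k => {ω | (k : ℕ∞) < N ω} ∩ W k ⁻¹' {1}
  have hA : ∀ k, MeasurableSet[ℱ k] (A k) := fun k =>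
    (hN k).inter (hWmeas k (measurableSet_singleton 1))
  have hA_ind : ∀ (k : ℕ) ω, {ω' | (k : ℕ∞) < N ω'}.indicator (fun _ => (1 : ℝ≥0∞)) ω *
      ENNReal.ofReal (W k ω) = (A k).indicator 1 ω := by
    intro k ω
    rw [ofReal_eq_indicator_preimage_one (hW01 k), ← Pi.one_def, ← Pi.mul_apply,
      ← Set.inter_indicator_one]
  have hAE_ind : ∀ (k : ℕ) ω, (A k).indicator 1 ω * (E k).indicator (fun _ => (1 : ℝ≥0∞)) ω =
      (A k ∩ E k).indicator 1 ω := by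
    intro k ω
    rw [← Pi.one_def, ← Pi.mul_apply, ← Set.inter_indicator_one]
  simp_rw [hA_ind, hAE_ind]
  rw [lintegral_tsum_indicator_one fun k => ℱ.le k _ (hA k),
    lintegral_tsum_indicator_one fun k => (ℱ.le k _ (hA k)).inter (hE k), ← ENNReal.tsum_mul_left]
  exact ENNReal.tsum_le_tsum fun k =>
    ofReal_mul_measure_le_measure_inter_of_le_condExp_indicator (ℱ.le k) (hA k) (hE k) (hEp k)

/-- Inequality (3.18) of the paper (Cartis–Scheinberg, Lemma 2.1): if each event `E k`
has conditional probability at least `p` given `ℱ k`, `W k` is a `{0,1}`-valued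
`ℱ k`-measurable weight, and `{k < N} ∈ ℱ k`, then
`E[Σ_{k<N} W_k·1_{E_k}] ≥ p·E[Σ_{k<N} W_k]`. -/
theorem expected_weighted_accurate_ge
    {Ω : Type*} {mΩ : MeasurableSpace Ω} (μ : Measure Ω) [IsProbabilityMeasure μ]
    (ℱ : Filtration ℕ mΩ) (p : ℝ) (hp0 : 0 ≤ p) (hp1 : p ≤ 1)
    (W : ℕ → Ω → ℝ)
    (hW01 : ∀ k ω, W k ω = 0 ∨ W k ω = 1)
    (hWmeas : ∀ k, Measurable[ℱ k] (W k))
    (E : ℕ → Set Ω) (hE : ∀ k, MeasurableSet (E k))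
    (hEp : ∀ k, ∀ᵐ ω ∂μ,
      p ≤ (μ[(E k).indicator (fun _ => (1 : ℝ)) | ℱ k]) ω)
    (N : Ω → ℕ∞)
    (hN : ∀ k, MeasurableSet[ℱ k] {ω | (k : ℕ∞) < N ω}) :
    ENNReal.ofReal p *
        ∫⁻ ω, ∑' (k : ℕ), ({ω' | (k : ℕ∞) < N ω'}.indicator (fun _ => (1 : ℝ≥0∞)) ω) *
          ENNReal.ofReal (W k ω) ∂μ
      ≤ ∫⁻ ω, ∑' (k : ℕ), ({ω' | (k : ℕ∞) < N ω'}.indicator (fun _ => (1 : ℝ≥0∞)) ω) *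
          ENNReal.ofReal (W k ω) * ((E k).indicator (fun _ => (1 : ℝ≥0∞)) ω) ∂μ :=
  expected_weighted_accurate_ge_general μ ℱ p W hW01 hWmeas E hE hEp N hN
end

section
/- Work on a probability space (Ω, 𝒜, P) equipped with a filtration (ℱ_k)_{k∈ℕ} of sub-σ-algebras of 𝒜, and let p ∈ (0,1]. For each k ∈ ℕ let W_k be a {0,1}-valued ℱ_k-measurable random variable and let E_k ∈ 𝒜 be an event with P[E_k | ℱ_k] ≥ p almost surely. Let N : Ω → ℕ ∪ {∞} satisfy {k < N} ∈ ℱ_k for every k ∈ ℕ, and assume E[Σ_{k<N} W_k] < ∞. Then E[Σ_{k<N} W_k·(1 − 1_{E_k})] ≤ ((1−p)/p)·E[Σ_{k<N} W_k·1_{E_k}]. -/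
open MeasureTheory
open scoped ENNReal

/-!
Put `A k = {k < N} ∩ {W k = 1}`, an `ℱ k`-measurable event. Integrating the bound
`p ≤ P[E k | ℱ k]` over `A k` gives `p P(A k) ≤ P(A k ∩ E k)`, i.e.
`P(A k \ E k) ≤ ((1 - p) / p) P(A k ∩ E k)`. By Tonelli both expectations are the sums over `k`
of these probabilities, so summing the termwise bound proves the claim.
-/

section

variable {Ω : Type*} {m m₀ : MeasurableSpace Ω} {μ : Measure Ω}

theorem mul_measureReal_le_measureReal_inter_of_le_condExp_indicator [IsFiniteMeasure μ]
    (hm : m ≤ m₀) {A E : Set Ω} (hA : MeasurableSet[m] A) (hE : MeasurableSet E) {p : ℝ}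
    (hp : ∀ᵐ ω ∂μ, p ≤ μ[E.indicator (fun _ => (1 : ℝ)) | m] ω) :
    p * μ.real A ≤ μ.real (A ∩ E) := by
  have hint : Integrable (E.indicator (fun _ => (1 : ℝ))) μ :=
    (integrable_const 1).indicator hE
  calc p * μ.real A = ∫ _ in A, p ∂μ := by rw [setIntegral_const, smul_eq_mul, mul_comm]
    _ ≤ ∫ ω in A, μ[E.indicator (fun _ => (1 : ℝ)) | m] ω ∂μ :=
      setIntegral_mono_ae_restrict (integrable_const p).integrableOn
        integrable_condExp.integrableOn (ae_restrict_of_ae hp)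
    _ = ∫ ω in A, E.indicator (fun _ => (1 : ℝ)) ω ∂μ := setIntegral_condExp hm hint hA
    _ = μ.real (A ∩ E) := by
      rw [setIntegral_indicator hE, setIntegral_const, smul_eq_mul, mul_one]

theorem measure_inter_compl_le_of_mul_measureReal_le [IsFiniteMeasure μ] {A E : Set Ω}
    (hE : MeasurableSet E) {p : ℝ} (hp0 : 0 < p) (hp1 : p ≤ 1)
    (h : p * μ.real A ≤ μ.real (A ∩ E)) :
    μ (A ∩ Eᶜ) ≤ ENNReal.ofReal ((1 - p) / p) * μ (A ∩ E) := by
  have hsplit : μ.real (A ∩ E) + μ.real (A ∩ Eᶜ) = μ.real A := by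
    rw [← Set.sdiff_eq, measureReal_inter_add_sdiff hE]
  have hle : μ.real (A ∩ Eᶜ) ≤ (1 - p) / p * μ.real (A ∩ E) := by
    rw [div_mul_eq_mul_div, le_div_iff₀ hp0]
    nlinarith [measureReal_nonneg (μ := μ) (s := A ∩ E)]
  rw [← ofReal_measureReal, ← ofReal_measureReal,
    ← ENNReal.ofReal_mul (div_nonneg (by linarith) hp0.le)]
  exact ENNReal.ofReal_le_ofReal hle

theorem indicator_mul_ofReal_mul_indicator_of_eq_zero_or_eq_one {T S : Set Ω} {f : Ω → ℝ}
    {ω : Ω} (hf : f ω = 0 ∨ f ω = 1) :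
    T.indicator (fun _ => 1) ω * ENNReal.ofReal (f ω) * S.indicator (fun _ => 1) ω =
      (T ∩ {ω | f ω = 1} ∩ S).indicator (1 : Ω → ℝ≥0∞) ω := by
  rcases hf with hf | hf <;> simp [← Pi.one_def, Set.inter_indicator_one, hf]

theorem lintegral_tsum_indicator_mul_ofReal_mul_indicator (T S : ℕ → Set Ω) {W : ℕ → Ω → ℝ}
    (hW01 : ∀ k ω, W k ω = 0 ∨ W k ω = 1) (hT : ∀ k, MeasurableSet (T k))
    (hW : ∀ k, Measurable (W k)) (hS : ∀ k, MeasurableSet (S k)) :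
    ∫⁻ ω, ∑' k, (T k).indicator (fun _ => 1) ω * ENNReal.ofReal (W k ω) *
        (S k).indicator (fun _ => 1) ω ∂μ =
      ∑' k, μ (T k ∩ {ω | W k ω = 1} ∩ S k) := by
  have hmeas k : MeasurableSet (T k ∩ {ω | W k ω = 1} ∩ S k) :=
    ((hT k).inter (hW k (measurableSet_singleton 1))).inter (hS k)
  rw [← lintegral_congr fun ω => tsum_congr fun k =>
      (indicator_mul_ofReal_mul_indicator_of_eq_zero_or_eq_one (hW01 k ω)).symm,
    lintegral_tsum fun k => (measurable_one.indicator (hmeas k)).aemeasurable]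
  exact tsum_congr fun k => lintegral_indicator_one (hmeas k)

end

theorem expected_inaccurate_le_general
    {Ω : Type*} {mΩ : MeasurableSpace Ω} (μ : Measure Ω) [IsProbabilityMeasure μ]
    (ℱ : Filtration ℕ mΩ) (p : ℝ) (hp0 : 0 < p) (hp1 : p ≤ 1)
    (W : ℕ → Ω → ℝ)
    (hW01 : ∀ k ω, W k ω = 0 ∨ W k ω = 1)
    (hWmeas : ∀ k, Measurable[ℱ k] (W k))
    (E : ℕ → Set Ω) (hE : ∀ k, MeasurableSet (E k))
    (hEp : ∀ k, ∀ᵐ ω ∂μ,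
      p ≤ (μ[(E k).indicator (fun _ => (1 : ℝ)) | ℱ k]) ω)
    (N : Ω → ℕ∞)
    (hN : ∀ k, MeasurableSet[ℱ k] {ω | (k : ℕ∞) < N ω}) :
    ∫⁻ ω, ∑' (k : ℕ), ({ω' | (k : ℕ∞) < N ω'}.indicator (fun _ => (1 : ℝ≥0∞)) ω) *
          ENNReal.ofReal (W k ω) * (((E k)ᶜ).indicator (fun _ => (1 : ℝ≥0∞)) ω) ∂μ
      ≤ ENNReal.ofReal ((1 - p) / p) *
        ∫⁻ ω, ∑' (k : ℕ), ({ω' | (k : ℕ∞) < N ω'}.indicator (fun _ => (1 : ℝ≥0∞)) ω) *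
          ENNReal.ofReal (W k ω) * ((E k).indicator (fun _ => (1 : ℝ≥0∞)) ω) ∂μ := by
  have hA k : MeasurableSet[ℱ k] ({ω | (k : ℕ∞) < N ω} ∩ {ω | W k ω = 1}) :=
    (hN k).inter (hWmeas k (measurableSet_singleton 1))
  have hNm k := ℱ.le k _ (hN k)
  have hWm k := (hWmeas k).mono (ℱ.le k) le_rfl
  rw [lintegral_tsum_indicator_mul_ofReal_mul_indicator _ _ hW01 hNm hWm fun k => (hE k).compl,
    lintegral_tsum_indicator_mul_ofReal_mul_indicator _ _ hW01 hNm hWm hE,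
    ← ENNReal.tsum_mul_left]
  exact ENNReal.tsum_le_tsum fun k =>
    measure_inter_compl_le_of_mul_measureReal_le (hE k) hp0 hp1 <|
      mul_measureReal_le_measureReal_inter_of_le_condExp_indicator (ℱ.le k) (hA k) (hE k) (hEp k)

/-- Lemma 3.4 of the paper (Cartis–Scheinberg, Lemma 2.6): with conditional probability
of accuracy at least `p`, the expected number of inaccurate weighted iterations before
`N` is at most `((1−p)/p)` times the expected number of accurate ones. -/
theorem expected_inaccurate_le
    {Ω : Type*} {mΩ : MeasurableSpace Ω} (μ : Measure Ω) [IsProbabilityMeasure μ]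
    (ℱ : Filtration ℕ mΩ) (p : ℝ) (hp0 : 0 < p) (hp1 : p ≤ 1)
    (W : ℕ → Ω → ℝ)
    (hW01 : ∀ k ω, W k ω = 0 ∨ W k ω = 1)
    (hWmeas : ∀ k, Measurable[ℱ k] (W k))
    (E : ℕ → Set Ω) (hE : ∀ k, MeasurableSet (E k))
    (hEp : ∀ k, ∀ᵐ ω ∂μ,
      p ≤ (μ[(E k).indicator (fun _ => (1 : ℝ)) | ℱ k]) ω)
    (N : Ω → ℕ∞)
    (hN : ∀ k, MeasurableSet[ℱ k] {ω | (k : ℕ∞) < N ω})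
    (hfin : (∫⁻ ω, ∑' (k : ℕ), ({ω' | (k : ℕ∞) < N ω'}.indicator (fun _ => (1 : ℝ≥0∞)) ω) *
      ENNReal.ofReal (W k ω) ∂μ) ≠ ⊤) :
    ∫⁻ ω, ∑' (k : ℕ), ({ω' | (k : ℕ∞) < N ω'}.indicator (fun _ => (1 : ℝ≥0∞)) ω) *
          ENNReal.ofReal (W k ω) * (((E k)ᶜ).indicator (fun _ => (1 : ℝ≥0∞)) ω) ∂μ
      ≤ ENNReal.ofReal ((1 - p) / p) *
        ∫⁻ ω, ∑' (k : ℕ), ({ω' | (k : ℕ∞) < N ω'}.indicator (fun _ => (1 : ℝ≥0∞)) ω) *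
          ENNReal.ofReal (W k ω) * ((E k).indicator (fun _ => (1 : ℝ≥0∞)) ω) ∂μ :=
  expected_inaccurate_le_general μ ℱ p hp0 hp1 W hW01 hWmeas E hE hEp N hN
end

section
/- Work on a probability space (Ω, 𝒜, P) equipped with a filtration (ℱ_k)_{k∈ℕ} of sub-σ-algebras of 𝒜, and let p ∈ (0,1]. For each k ∈ ℕ let W_k be a {0,1}-valued ℱ_k-measurable random variable, let E_k ∈ 𝒜 be an event with P[E_k | ℱ_k] ≥ p almost surely, and let S_k ∈ 𝒜 be an event. Let N : Ω → ℕ ∪ {∞} satisfy {k < N} ∈ ℱ_k for every k, and assume that almost surely: (a) for every k < N, W_k·1_{E_k} ≤ 1_{S_k}; and (b) Σ_{k<N} W_k·1_{S_k} ≤ N/2. Then E[Σ_{k<N} W_k] ≤ E[N]/(2p), where sums and expectations of nonnegative quantities take values in [0,∞]. -/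
/-!
Let `A_k = {k < N, W_k = 1}`, an `ℱ_k`-measurable event. Conditioning on `ℱ_k` shows that a
proportion at least `p` of `A_k` is accurate, `p · P[A_k] ≤ P[A_k ∩ E_k]`. Hypothesis (a) makes
every iteration of `A_k ∩ E_k` a successful one, so summing over `k` and using (b),
`p · E[Σ_{k<N} W_k] = p · Σ_k P[A_k] ≤ E[Σ_k 1_{A_k ∩ E_k}] ≤ E[N]/2`.
-/

open MeasureTheory
open scoped ENNReal

lemma indicator_one_mul_ofReal_eq_indicator_inter {Ω : Type*} (s : Set Ω) (w : Ω → ℝ)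
    {ω : Ω} (hw : w ω = 0 ∨ w ω = 1) :
    s.indicator (fun _ => (1 : ℝ≥0∞)) ω * ENNReal.ofReal (w ω)
      = (s ∩ {ω' | w ω' = 1}).indicator (fun _ => 1) ω := by
  rcases hw with h | h <;> by_cases hs : ω ∈ s <;> simp [h, hs]

lemma indicator_inter_le_indicator_mul_ofReal_mul_indicator {Ω : Type*} (s E S : Set Ω)
    (w : Ω → ℝ) {ω : Ω} (hw : w ω = 0 ∨ w ω = 1)
    (h : ω ∈ s → w ω * E.indicator (fun _ => (1 : ℝ)) ω ≤ S.indicator (fun _ => 1) ω) :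
    (s ∩ {ω' | w ω' = 1} ∩ E).indicator (fun _ => (1 : ℝ≥0∞)) ω
      ≤ s.indicator (fun _ => 1) ω * ENNReal.ofReal (w ω) * S.indicator (fun _ => 1) ω := by
  rw [indicator_one_mul_ofReal_eq_indicator_inter s w hw]
  by_cases hω : ω ∈ s ∩ {ω' | w ω' = 1} ∩ E
  · have hωS : ω ∈ S := by
      by_contra hωS
      have h := h hω.1.1
      norm_num [hω.1.2.out, hω.2, hωS] at h
    rw [Set.indicator_of_mem hω, Set.indicator_of_mem hω.1, Set.indicator_of_mem hωS, one_mul]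
  · simp [Set.indicator_of_notMem hω]

lemma tsum_measure_eq_lintegral_tsum_indicator {Ω : Type*} {mΩ : MeasurableSpace Ω}
    (μ : Measure Ω) {s : ℕ → Set Ω} (hs : ∀ k, MeasurableSet (s k)) :
    ∑' k, μ (s k) = ∫⁻ ω, ∑' k, (s k).indicator (fun _ => (1 : ℝ≥0∞)) ω ∂μ := by
  rw [lintegral_tsum fun k => (measurable_const.indicator (hs k)).aemeasurable]
  exact tsum_congr fun k => (lintegral_indicator_one (hs k)).symm

lemma ofReal_mul_measure_le_measure_inter_of_le_condExp {Ω : Type*} {m mΩ : MeasurableSpace Ω}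
    {μ : Measure Ω} [IsFiniteMeasure μ] (hm : m ≤ mΩ) {p : ℝ} {A E : Set Ω}
    (hA : MeasurableSet[m] A) (hE : MeasurableSet E)
    (hEp : ∀ᵐ ω ∂μ, p ≤ (μ[E.indicator (fun _ => (1 : ℝ)) | m]) ω) :
    ENNReal.ofReal p * μ A ≤ μ (A ∩ E) := by
  have hreal : p * μ.real A ≤ μ.real (A ∩ E) :=
    calc p * μ.real A = ∫ _ in A, p ∂μ := by rw [setIntegral_const, smul_eq_mul, mul_comm]
      _ ≤ ∫ ω in A, (μ[E.indicator (fun _ => (1 : ℝ)) | m]) ω ∂μ :=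
        setIntegral_mono_ae_restrict (integrable_const p).integrableOn
          integrable_condExp.integrableOn (ae_restrict_of_ae hEp)
      _ = ∫ ω in A, E.indicator (fun _ => (1 : ℝ)) ω ∂μ :=
        setIntegral_condExp hm ((integrable_const 1).indicator hE) hA
      _ = μ.real (A ∩ E) := by
        rw [setIntegral_indicator hE, setIntegral_const, smul_eq_mul, mul_one]
  calc ENNReal.ofReal p * μ A = ENNReal.ofReal (p * μ.real A) := by
        rw [ENNReal.ofReal_mul' measureReal_nonneg, ofReal_measureReal]
    _ ≤ ENNReal.ofReal (μ.real (A ∩ E)) := ENNReal.ofReal_le_ofReal hreal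
    _ = μ (A ∩ E) := ofReal_measureReal

lemma ENNReal.le_div_ofReal_two_mul {x y : ℝ≥0∞} {p : ℝ} (hp : 0 < p)
    (h : ENNReal.ofReal p * x ≤ y / 2) : x ≤ y / ENNReal.ofReal (2 * p) := by
  rw [ENNReal.le_div_iff_mul_le (Or.inl (by positivity)) (Or.inl ENNReal.ofReal_ne_top),
    ENNReal.ofReal_mul zero_le_two, ENNReal.ofReal_ofNat, mul_comm, mul_assoc]
  calc 2 * (ENNReal.ofReal p * x) ≤ 2 * (y / 2) := by gcongr
    _ = y := ENNReal.mul_div_cancel two_ne_zero ENNReal.ofNat_ne_top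

theorem expected_small_radius_le_general
    {Ω : Type*} {mΩ : MeasurableSpace Ω} (μ : Measure Ω) [IsProbabilityMeasure μ]
    (ℱ : Filtration ℕ mΩ) (p : ℝ) (hp0 : 0 < p)
    (W : ℕ → Ω → ℝ)
    (hW01 : ∀ k ω, W k ω = 0 ∨ W k ω = 1)
    (hWmeas : ∀ k, Measurable[ℱ k] (W k))
    (E : ℕ → Set Ω) (hE : ∀ k, MeasurableSet (E k))
    (hEp : ∀ k, ∀ᵐ ω ∂μ,
      p ≤ (μ[(E k).indicator (fun _ => (1 : ℝ)) | ℱ k]) ω)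
    (S : ℕ → Set Ω)
    (N : Ω → ℕ∞)
    (hN : ∀ k, MeasurableSet[ℱ k] {ω | (k : ℕ∞) < N ω})
    (ha : ∀ᵐ ω ∂μ, ∀ k : ℕ, (k : ℕ∞) < N ω →
      W k ω * (E k).indicator (fun _ => (1 : ℝ)) ω ≤ (S k).indicator (fun _ => (1 : ℝ)) ω)
    (hb : ∀ᵐ ω ∂μ,
      (∑' (k : ℕ), ({ω' | (k : ℕ∞) < N ω'}.indicator (fun _ => (1 : ℝ≥0∞)) ω) *
          ENNReal.ofReal (W k ω) * ((S k).indicator (fun _ => (1 : ℝ≥0∞)) ω))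
        ≤ (N ω : ℝ≥0∞) / 2) :
    (∫⁻ ω, ∑' (k : ℕ), ({ω' | (k : ℕ∞) < N ω'}.indicator (fun _ => (1 : ℝ≥0∞)) ω) *
        ENNReal.ofReal (W k ω) ∂μ)
      ≤ (∫⁻ ω, (N ω : ℝ≥0∞) ∂μ) / ENNReal.ofReal (2 * p) := by
  set A : ℕ → Set Ω := fun k => {ω | (k : ℕ∞) < N ω} ∩ {ω | W k ω = 1}
  have hAℱ (k : ℕ) : MeasurableSet[ℱ k] (A k) := (hN k).inter (hWmeas k (measurableSet_singleton 1))
  have hA (k : ℕ) : MeasurableSet (A k) := ℱ.le k _ (hAℱ k)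
  have hAE (k : ℕ) : MeasurableSet (A k ∩ E k) := (hA k).inter (hE k)
  rw [lintegral_congr fun ω => tsum_congr fun k =>
      indicator_one_mul_ofReal_eq_indicator_inter _ _ (hW01 k ω),
    ← tsum_measure_eq_lintegral_tsum_indicator μ hA]
  refine ENNReal.le_div_ofReal_two_mul hp0 ?_
  have hsuccess : ∀ᵐ ω ∂μ, ∑' k, (A k ∩ E k).indicator (fun _ => (1 : ℝ≥0∞)) ω ≤ N ω / 2 := by
    filter_upwards [ha, hb] with ω hωa hωb
    exact (ENNReal.tsum_le_tsum fun k =>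
      indicator_inter_le_indicator_mul_ofReal_mul_indicator _ _ _ _ (hW01 k ω) (hωa k)).trans hωb
  calc ENNReal.ofReal p * ∑' k, μ (A k) = ∑' k, ENNReal.ofReal p * μ (A k) :=
        ENNReal.tsum_mul_left.symm
    _ ≤ ∑' k, μ (A k ∩ E k) := ENNReal.tsum_le_tsum fun k =>
        ofReal_mul_measure_le_measure_inter_of_le_condExp (ℱ.le k) (hAℱ k) (hE k) (hEp k)
    _ = ∫⁻ ω, ∑' k, (A k ∩ E k).indicator (fun _ => 1) ω ∂μ :=
        tsum_measure_eq_lintegral_tsum_indicator μ hAE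
    _ ≤ ∫⁻ ω, (N ω : ℝ≥0∞) / 2 ∂μ := lintegral_mono_ae hsuccess
    _ = (∫⁻ ω, (N ω : ℝ≥0∞) ∂μ) / 2 := by
        simp only [div_eq_mul_inv]; exact lintegral_mul_const' _ _ (by simp)

/-- The bound (3.21) of the paper: if every accurate iteration with `W_k = 1` before `N`
is successful and at most half of the iterations before `N` can be successful with
`W_k = 1`, then `E[Σ_{k<N} W_k] ≤ E[N]/(2p)`. -/
theorem expected_small_radius_le
    {Ω : Type*} {mΩ : MeasurableSpace Ω} (μ : Measure Ω) [IsProbabilityMeasure μ]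
    (ℱ : Filtration ℕ mΩ) (p : ℝ) (hp0 : 0 < p) (hp1 : p ≤ 1)
    (W : ℕ → Ω → ℝ)
    (hW01 : ∀ k ω, W k ω = 0 ∨ W k ω = 1)
    (hWmeas : ∀ k, Measurable[ℱ k] (W k))
    (E : ℕ → Set Ω) (hE : ∀ k, MeasurableSet (E k))
    (hEp : ∀ k, ∀ᵐ ω ∂μ,
      p ≤ (μ[(E k).indicator (fun _ => (1 : ℝ)) | ℱ k]) ω)
    (S : ℕ → Set Ω) (hS : ∀ k, MeasurableSet (S k))
    (N : Ω → ℕ∞)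
    (hN : ∀ k, MeasurableSet[ℱ k] {ω | (k : ℕ∞) < N ω})
    (ha : ∀ᵐ ω ∂μ, ∀ k : ℕ, (k : ℕ∞) < N ω →
      W k ω * (E k).indicator (fun _ => (1 : ℝ)) ω ≤ (S k).indicator (fun _ => (1 : ℝ)) ω)
    (hb : ∀ᵐ ω ∂μ,
      (∑' (k : ℕ), ({ω' | (k : ℕ∞) < N ω'}.indicator (fun _ => (1 : ℝ≥0∞)) ω) *
          ENNReal.ofReal (W k ω) * ((S k).indicator (fun _ => (1 : ℝ≥0∞)) ω))
        ≤ (N ω : ℝ≥0∞) / 2) :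
    (∫⁻ ω, ∑' (k : ℕ), ({ω' | (k : ℕ∞) < N ω'}.indicator (fun _ => (1 : ℝ≥0∞)) ω) *
        ENNReal.ofReal (W k ω) ∂μ)
      ≤ (∫⁻ ω, (N ω : ℝ≥0∞) ∂μ) / ENNReal.ofReal (2 * p) :=
  expected_small_radius_le_general μ ℱ p hp0 W hW01 hWmeas E hE hEp S N hN ha hb
end

section
/- Let (Ω, 𝒜, P) be a probability space, 𝒢 ⊆ 𝒜 a sub-σ-algebra, α ∈ (0,1] and ν ∈ (0,1]. Let X and B̄ be nonnegative 𝒢-measurable random variables, and let Y and Z be nonnegative random variables with Y ≥ X − Z almost surely. Define the events M = {Z ≤ ν·Y}, Ḡ = {Y ≥ B̄} and G = {X ≥ 2·B̄}. Assume: (a) P[{Z ≤ B̄} | 𝒢] ≥ √α almost surely; and (b) for almost every ω ∈ Ḡ, E[1_M | 𝒢 ∨ σ(Ḡ)](ω) ≥ √α, where 𝒢 ∨ σ(Ḡ) is the σ-algebra generated by 𝒢 and the event Ḡ. Then: (1) for almost every ω ∈ G, E[1_M | 𝒢](ω) ≥ α; and (2) for almost every ω ∈ Ω, if E[1_M | 𝒢](ω)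 < α then X(ω) < 2·B̄(ω). -/
open MeasureTheory

/-- Theorem 4.2 of the paper (abstract form): with `M = {Z ≤ ν·Y}`, `Ḡ = {Y ≥ B̄}` and
`G = {X ≥ 2B̄}`, the conditional accuracy bounds (a)–(b) give `P[M | 𝒢] ≥ α` a.e. on `G`;
conversely, wherever `P[M | 𝒢] < α` one has `X < 2B̄` (degraded optimality). -/
theorem model_accuracy_or_degraded_optimality
    {Ω : Type*} (𝒢 : MeasurableSpace Ω) {mΩ : MeasurableSpace Ω} (μ : Measure Ω) [IsProbabilityMeasure μ]
    (h𝒢 : 𝒢 ≤ mΩ)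
    (α ν : ℝ) (hα0 : 0 < α) (hα1 : α ≤ 1) (hν0 : 0 < ν) (hν1 : ν ≤ 1)
    (X Bb : Ω → ℝ)
    (hX : Measurable[𝒢] X) (hBb : Measurable[𝒢] Bb)
    (hX0 : ∀ ω, 0 ≤ X ω) (hBb0 : ∀ ω, 0 ≤ Bb ω)
    (Y Z : Ω → ℝ) (hY : Measurable Y) (hZ : Measurable Z)
    (hY0 : ∀ ω, 0 ≤ Y ω) (hZ0 : ∀ ω, 0 ≤ Z ω)
    (hYXZ : ∀ᵐ ω ∂μ, X ω - Z ω ≤ Y ω)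
    (ha : ∀ᵐ ω ∂μ,
      Real.sqrt α ≤ (μ[({ω' | Z ω' ≤ Bb ω'}).indicator (fun _ => (1 : ℝ)) | 𝒢]) ω)
    (hb : ∀ᵐ ω ∂μ, ω ∈ {ω' | Bb ω' ≤ Y ω'} →
      Real.sqrt α ≤
        (μ[({ω' | Z ω' ≤ ν * Y ω'}).indicator (fun _ => (1 : ℝ)) |
          𝒢 ⊔ MeasurableSpace.generateFrom {{ω' | Bb ω' ≤ Y ω'}}]) ω) :
    (∀ᵐ ω ∂μ, 2 * Bb ω ≤ X ω →
      α ≤ (μ[({ω' | Z ω' ≤ ν * Y ω'}).indicator (fun _ => (1 : ℝ)) | 𝒢]) ω) ∧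
    (∀ᵐ ω ∂μ,
      (μ[({ω' | Z ω' ≤ ν * Y ω'}).indicator (fun _ => (1 : ℝ)) | 𝒢]) ω < α →
      X ω < 2 * Bb ω) := by
  classical
  letI _instmΩ : MeasurableSpace Ω := mΩ
  set M : Set Ω := {ω' | Z ω' ≤ ν * Y ω'} with hMdef
  set A : Set Ω := {ω' | Z ω' ≤ Bb ω'} with hAdef
  set Gb : Set Ω := {ω' | Bb ω' ≤ Y ω'} with hGbdef
  set G : Set Ω := {ω' | 2 * Bb ω' ≤ X ω'} with hGdef
  have hBb' : Measurable Bb := hBb.mono h𝒢 le_rfl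
  have hX' : Measurable X := hX.mono h𝒢 le_rfl
  have hY' : Measurable Y := hY
  have hZ' : Measurable Z := hZ
  have hM : MeasurableSet M := measurableSet_le hZ' (hY'.const_mul ν)
  have hA : MeasurableSet A := measurableSet_le hZ' hBb'
  have hGb : MeasurableSet Gb := measurableSet_le hBb' hY'
  have hG : MeasurableSet[𝒢] G := measurableSet_le (hBb.const_mul 2) hX
  have hm2 : 𝒢 ⊔ MeasurableSpace.generateFrom {Gb} ≤ mΩ := by
    refine sup_le h𝒢 (MeasurableSpace.generateFrom_le ?_)
    rintro s rfl
    exact hGb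
  have hGbm2 : MeasurableSet[𝒢 ⊔ MeasurableSpace.generateFrom {Gb}] Gb :=
    (le_sup_right : MeasurableSpace.generateFrom {Gb} ≤ 𝒢 ⊔ MeasurableSpace.generateFrom {Gb}) _
      (MeasurableSpace.measurableSet_generateFrom rfl)
  haveI : SigmaFinite (μ.trim hm2) := by
    exact (isFiniteMeasure_trim hm2).toSigmaFinite
  -- integrability of indicators
  have hIntM : Integrable (M.indicator (fun _ => (1 : ℝ))) μ :=
    (integrable_const 1).indicator hM
  have hIntA : Integrable (A.indicator (fun _ => (1 : ℝ))) μ :=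
    (integrable_const 1).indicator hA
  have hIntGb : Integrable (Gb.indicator (fun _ => (1 : ℝ))) μ :=
    (integrable_const 1).indicator hGb
  have hIntGbM : Integrable ((Gb ∩ M).indicator (fun _ => (1 : ℝ))) μ :=
    (integrable_const 1).indicator (hGb.inter hM)
  have hIntGA : Integrable ((G ∩ A).indicator (fun _ => (1 : ℝ))) μ :=
    (integrable_const 1).indicator ((h𝒢 _ hG).inter hA)
  have hsa : (0:ℝ) ≤ Real.sqrt α := Real.sqrt_nonneg α
  -- Chain 1 : √α • 1_Gb ≤ᵐ μ[1_{Gb∩M} | 𝒢 ⊔ MeasurableSpace.generateFrom {Gb}]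
  have h3 : μ[(Gb ∩ M).indicator (fun _ => (1 : ℝ)) | 𝒢 ⊔ MeasurableSpace.generateFrom {Gb}]
      =ᵐ[μ] Gb.indicator (μ[M.indicator (fun _ => (1 : ℝ)) | 𝒢 ⊔ MeasurableSpace.generateFrom {Gb}]) := by
    have : (Gb ∩ M).indicator (fun _ => (1 : ℝ))
        = Gb.indicator (M.indicator (fun _ => (1 : ℝ))) := by
      rw [Set.indicator_indicator]
    rw [this]
    exact condExp_indicator hIntM hGbm2
  have h4 : (Real.sqrt α • Gb.indicator (fun _ => (1 : ℝ)))
      ≤ᵐ[μ] μ[(Gb ∩ M).indicator (fun _ => (1 : ℝ)) | 𝒢 ⊔ MeasurableSpace.generateFrom {Gb}] := by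
    filter_upwards [hb, h3] with ω hbω h3ω
    rw [h3ω]
    by_cases hω : ω ∈ Gb
    · simp only [Pi.smul_apply, Set.indicator_of_mem hω, smul_eq_mul, mul_one]
      exact hbω hω
    · simp [Set.indicator_of_notMem hω]
  have h5 : Real.sqrt α • μ[Gb.indicator (fun _ => (1 : ℝ)) | 𝒢]
      ≤ᵐ[μ] μ[M.indicator (fun _ => (1 : ℝ)) | 𝒢] := by
    have e1 : μ[Real.sqrt α • Gb.indicator (fun _ => (1 : ℝ)) | 𝒢]
        =ᵐ[μ] Real.sqrt α • μ[Gb.indicator (fun _ => (1 : ℝ)) | 𝒢] :=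
      condExp_smul _ _ _
    have e2 : μ[Real.sqrt α • Gb.indicator (fun _ => (1 : ℝ)) | 𝒢]
        ≤ᵐ[μ] μ[μ[(Gb ∩ M).indicator (fun _ => (1 : ℝ)) | 𝒢 ⊔ MeasurableSpace.generateFrom {Gb}] | 𝒢] :=
      condExp_mono (hIntGb.smul _) integrable_condExp h4
    have e3 : μ[μ[(Gb ∩ M).indicator (fun _ => (1 : ℝ)) | 𝒢 ⊔ MeasurableSpace.generateFrom {Gb}] | 𝒢]
        =ᵐ[μ] μ[(Gb ∩ M).indicator (fun _ => (1 : ℝ)) | 𝒢] :=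
      condExp_condExp_of_le le_sup_left hm2
    have e4 : μ[(Gb ∩ M).indicator (fun _ => (1 : ℝ)) | 𝒢]
        ≤ᵐ[μ] μ[M.indicator (fun _ => (1 : ℝ)) | 𝒢] := by
      refine condExp_mono hIntGbM hIntM ?_
      exact Filter.Eventually.of_forall
        (Set.indicator_le_indicator_of_subset Set.inter_subset_right (fun _ => zero_le_one))
    filter_upwards [e1, e2, e3, e4] with ω e1ω e2ω e3ω e4ω
    calc (Real.sqrt α • μ[Gb.indicator (fun _ => (1 : ℝ)) | 𝒢]) ω
        = (μ[Real.sqrt α • Gb.indicator (fun _ => (1 : ℝ)) | 𝒢]) ω := e1ω.symm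
      _ ≤ (μ[μ[(Gb ∩ M).indicator (fun _ => (1 : ℝ)) | 𝒢 ⊔ MeasurableSpace.generateFrom {Gb}] | 𝒢]) ω := e2ω
      _ = (μ[(Gb ∩ M).indicator (fun _ => (1 : ℝ)) | 𝒢]) ω := e3ω
      _ ≤ (μ[M.indicator (fun _ => (1 : ℝ)) | 𝒢]) ω := e4ω
  -- Chain 2 : on G, √α ≤ μ[1_Gb | 𝒢]
  have h7 : μ[(G ∩ A).indicator (fun _ => (1 : ℝ)) | 𝒢]
      ≤ᵐ[μ] μ[Gb.indicator (fun _ => (1 : ℝ)) | 𝒢] := by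
    refine condExp_mono hIntGA hIntGb ?_
    filter_upwards [hYXZ] with ω hω
    by_cases h : ω ∈ G ∩ A
    · have hmem : ω ∈ Gb := by
        have h1 : 2 * Bb ω ≤ X ω := h.1
        have h2 : Z ω ≤ Bb ω := h.2
        have : Bb ω ≤ X ω - Z ω := by linarith
        exact le_trans this hω
      simp [Set.indicator_of_mem h, Set.indicator_of_mem hmem]
    · simp only [Set.indicator_of_notMem h]
      exact Set.indicator_nonneg (fun _ _ => zero_le_one) ω
  have h8 : μ[(G ∩ A).indicator (fun _ => (1 : ℝ)) | 𝒢]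
      =ᵐ[μ] G.indicator (μ[A.indicator (fun _ => (1 : ℝ)) | 𝒢]) := by
    have : (G ∩ A).indicator (fun _ => (1 : ℝ))
        = G.indicator (A.indicator (fun _ => (1 : ℝ))) := by
      rw [Set.indicator_indicator]
    rw [this]
    exact condExp_indicator hIntA hG
  -- combine
  have key : ∀ᵐ ω ∂μ, 2 * Bb ω ≤ X ω →
      α ≤ (μ[M.indicator (fun _ => (1 : ℝ)) | 𝒢]) ω := by
    filter_upwards [ha, h5, h7, h8] with ω haω h5ω h7ω h8ω hGω
    have hωG : ω ∈ G := hGω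
    have hGbge : Real.sqrt α ≤ (μ[Gb.indicator (fun _ => (1 : ℝ)) | 𝒢]) ω := by
      calc Real.sqrt α ≤ (μ[A.indicator (fun _ => (1 : ℝ)) | 𝒢]) ω := haω
        _ = G.indicator (μ[A.indicator (fun _ => (1 : ℝ)) | 𝒢]) ω :=
            (Set.indicator_of_mem hωG _).symm
        _ = (μ[(G ∩ A).indicator (fun _ => (1 : ℝ)) | 𝒢]) ω := h8ω.symm
        _ ≤ (μ[Gb.indicator (fun _ => (1 : ℝ)) | 𝒢]) ω := h7ω
    calc α = Real.sqrt α * Real.sqrt α := (Real.mul_self_sqrt hα0.le).symm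
      _ ≤ Real.sqrt α * (μ[Gb.indicator (fun _ => (1 : ℝ)) | 𝒢]) ω :=
          mul_le_mul_of_nonneg_left hGbge hsa
      _ = (Real.sqrt α • μ[Gb.indicator (fun _ => (1 : ℝ)) | 𝒢]) ω := rfl
      _ ≤ (μ[M.indicator (fun _ => (1 : ℝ)) | 𝒢]) ω := h5ω
  refine ⟨key, ?_⟩
  filter_upwards [key] with ω hω hlt
  by_contra h
  push_neg at h
  exact absurd (hω h) (not_le.mpr hlt)
end

section
/- Let (Ω, 𝒜, P) be a probability space, 𝒢 ⊆ 𝒜 a sub-σ-algebra, α ∈ (0,1] and ν ∈ (0,1]. Let X, B̄ and R be nonnegative 𝒢-measurable random variables, and let Y, Z and W be nonnegative random variables with Y ≥ X − Z almost surely. Define the events F = {W ≤ 2ν·Y·min(1, R)}, Ḡ = {Y ≥ B̄} and G = {X ≥ 2·B̄}. Assume: (a) P[{Z ≤ B̄} | 𝒢] ≥ √α almost surely; and (b) for almost every ω ∈ Ḡ, E[1_F | 𝒢 ∨ σ(Ḡ)](ω) ≥ √α, where 𝒢 ∨ σ(Ḡ) is the σ-algebra generated by 𝒢 and the event Ḡ.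 Then: (1) for almost every ω ∈ G, E[1_F | 𝒢](ω) ≥ α; and (2) for almost every ω ∈ Ω, if E[1_F | 𝒢](ω) < α then X(ω) < 2·B̄(ω). -/
open MeasureTheory

open MeasureTheory in
private lemma aux_msle {Ω : Type*} (m : MeasurableSpace Ω) {f g : Ω → ℝ}
    (hf : Measurable[m] f) (hg : Measurable[m] g) :
    MeasurableSet[m] {ω | f ω ≤ g ω} := by
  letI := m; exact measurableSet_le hf hg

open MeasureTheory in
private lemma aux_msF {Ω : Type*} (m : MeasurableSpace Ω) {W Y R : Ω → ℝ} (c : ℝ)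
    (hW : Measurable[m] W) (hY : Measurable[m] Y) (hR : Measurable[m] R) :
    MeasurableSet[m] {ω | W ω ≤ c * Y ω * min 1 (R ω)} := by
  letI := m
  exact measurableSet_le hW ((hY.const_mul c).mul (measurable_const.min hR))

open MeasureTheory in
private lemma aux_indInt {Ω : Type*} (m : MeasurableSpace Ω) (μ : @Measure Ω m)
    [IsFiniteMeasure μ] {f : Ω → ℝ} (hf : Integrable f μ) {s : Set Ω}
    (hs : MeasurableSet[m] s) : Integrable (s.indicator f) μ := by
  letI := m; exact hf.indicator hs

open MeasureTheory in
private lemma aux_constInt {Ω : Type*} (m : MeasurableSpace Ω) (μ : @Measure Ω m)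
    [IsFiniteMeasure μ] : Integrable (fun _ : Ω => (1:ℝ)) μ := by
  letI := m; exact integrable_const 1


/-- Theorem 4.3 of the paper (abstract form): with `F = {W ≤ 2ν·Y·min(1,R)}`,
`Ḡ = {Y ≥ B̄}` and `G = {X ≥ 2B̄}`, the conditional bounds (a)–(b) give
`P[F | 𝒢] ≥ α` a.e. on `G`; conversely, wherever `P[F | 𝒢] < α` one has `X < 2B̄`. -/
theorem function_accuracy_or_degraded_optimality
    {Ω : Type*} (𝒢 : MeasurableSpace Ω) {mΩ : MeasurableSpace Ω} (μ : Measure Ω) [IsProbabilityMeasure μ]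
    (h𝒢 : 𝒢 ≤ mΩ)
    (α ν : ℝ) (hα0 : 0 < α) (hα1 : α ≤ 1) (hν0 : 0 < ν) (hν1 : ν ≤ 1)
    (X Bb R : Ω → ℝ)
    (hX : Measurable[𝒢] X) (hBb : Measurable[𝒢] Bb) (hR : Measurable[𝒢] R)
    (hX0 : ∀ ω, 0 ≤ X ω) (hBb0 : ∀ ω, 0 ≤ Bb ω) (hR0 : ∀ ω, 0 ≤ R ω)
    (Y Z W : Ω → ℝ) (hY : Measurable Y) (hZ : Measurable Z) (hW : Measurable W)
    (hY0 : ∀ ω, 0 ≤ Y ω) (hZ0 : ∀ ω, 0 ≤ Z ω) (hW0 : ∀ ω, 0 ≤ W ω)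
    (hYXZ : ∀ᵐ ω ∂μ, X ω - Z ω ≤ Y ω)
    (ha : ∀ᵐ ω ∂μ,
      Real.sqrt α ≤ (μ[({ω' | Z ω' ≤ Bb ω'}).indicator (fun _ => (1 : ℝ)) | 𝒢]) ω)
    (hb : ∀ᵐ ω ∂μ, ω ∈ {ω' | Bb ω' ≤ Y ω'} →
      Real.sqrt α ≤
        (μ[({ω' | W ω' ≤ 2 * ν * Y ω' * min 1 (R ω')}).indicator (fun _ => (1 : ℝ)) |
          𝒢 ⊔ MeasurableSpace.generateFrom {{ω' | Bb ω' ≤ Y ω'}}]) ω) :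
    (∀ᵐ ω ∂μ, 2 * Bb ω ≤ X ω →
      α ≤ (μ[({ω' | W ω' ≤ 2 * ν * Y ω' * min 1 (R ω')}).indicator
            (fun _ => (1 : ℝ)) | 𝒢]) ω) ∧
    (∀ᵐ ω ∂μ,
      (μ[({ω' | W ω' ≤ 2 * ν * Y ω' * min 1 (R ω')}).indicator
          (fun _ => (1 : ℝ)) | 𝒢]) ω < α →
      X ω < 2 * Bb ω) := by

  have hsqrt0 : (0:ℝ) ≤ Real.sqrt α := Real.sqrt_nonneg α
  set A : Set Ω := {ω' | Z ω' ≤ Bb ω'} with hAdef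
  set F : Set Ω := {ω' | W ω' ≤ 2 * ν * Y ω' * min 1 (R ω')} with hFdef
  set Gb : Set Ω := {ω' | Bb ω' ≤ Y ω'} with hGbdef
  set G : Set Ω := {ω' | 2 * Bb ω' ≤ X ω'} with hGdef
  have hBb' : Measurable[mΩ] Bb := hBb.mono h𝒢 le_rfl
  have hY' : Measurable[mΩ] Y := hY
  have hZ' : Measurable[mΩ] Z := hZ
  have hW' : Measurable[mΩ] W := hW
  have hR' : Measurable[mΩ] R := hR.mono h𝒢 le_rfl
  have hA : MeasurableSet[mΩ] A := aux_msle mΩ hZ' hBb'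
  have hF : MeasurableSet[mΩ] F := aux_msF mΩ (2 * ν) hW' hY' hR'
  have hGb : MeasurableSet[mΩ] Gb := aux_msle mΩ hBb' hY'
  have hG : MeasurableSet[𝒢] G := aux_msle 𝒢 (hBb.const_mul 2) hX
  set m' : MeasurableSpace Ω := 𝒢 ⊔ MeasurableSpace.generateFrom {Gb} with hm'def
  have hm' : m' ≤ mΩ := by
    refine sup_le h𝒢 (MeasurableSpace.generateFrom_le ?_)
    intro t ht
    rcases ht with rfl
    exact hGb
  have h𝒢m' : 𝒢 ≤ m' := le_sup_left
  -- integrability facts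
  have hFint : Integrable (F.indicator (fun _ => (1:ℝ))) μ :=
    aux_indInt mΩ μ (aux_constInt mΩ μ) hF
  have hAint : Integrable (A.indicator (fun _ => (1:ℝ))) μ :=
    aux_indInt mΩ μ (aux_constInt mΩ μ) hA
  have hGbint : Integrable (Gb.indicator (fun _ => (1:ℝ))) μ :=
    aux_indInt mΩ μ (aux_constInt mΩ μ) hGb
  -- step: sqrt α • 1_Gb ≤ condexp of 1_F w.r.t. m', a.e.
  have hnn : (0:Ω → ℝ) ≤ᵐ[μ] F.indicator (fun _ => (1:ℝ)) := by
    filter_upwards with ω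
    exact Set.indicator_nonneg (fun _ _ => zero_le_one) ω
  have hstep2 : (fun ω => Real.sqrt α * Gb.indicator (fun _ => (1:ℝ)) ω)
      ≤ᵐ[μ] μ[F.indicator (fun _ => (1:ℝ)) | m'] := by
    filter_upwards [hb, condExp_nonneg (m := m') hnn] with ω h1 h2
    by_cases hω : ω ∈ Gb
    · simpa [Set.indicator_of_mem hω] using h1 hω
    · simpa [Set.indicator_of_notMem hω] using h2
  -- tower property
  have htow : μ[μ[F.indicator (fun _ => (1:ℝ)) | m'] | 𝒢]
      =ᵐ[μ] μ[F.indicator (fun _ => (1:ℝ)) | 𝒢] :=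
    condExp_condExp_of_le h𝒢m' hm'
  have hsmulint : Integrable (fun ω => Real.sqrt α * Gb.indicator (fun _ => (1:ℝ)) ω) μ :=
    hGbint.const_mul _
  have hmono1 : μ[(fun ω => Real.sqrt α * Gb.indicator (fun _ => (1:ℝ)) ω) | 𝒢]
      ≤ᵐ[μ] μ[μ[F.indicator (fun _ => (1:ℝ)) | m'] | 𝒢] :=
    condExp_mono hsmulint integrable_condExp hstep2
  have hsmul : μ[(fun ω => Real.sqrt α * Gb.indicator (fun _ => (1:ℝ)) ω) | 𝒢]
      =ᵐ[μ] fun ω => Real.sqrt α * (μ[Gb.indicator (fun _ => (1:ℝ)) | 𝒢]) ω := by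
    have := condExp_smul (μ := μ) (m := 𝒢) (Real.sqrt α) (Gb.indicator (fun _ => (1:ℝ)))
    exact this
  -- 1_{G} · 1_A ≤ 1_Gb a.e.
  have hind : (fun ω => G.indicator (A.indicator (fun _ => (1:ℝ))) ω)
      ≤ᵐ[μ] Gb.indicator (fun _ => (1:ℝ)) := by
    filter_upwards [hYXZ] with ω hωY
    by_cases hωG : ω ∈ G
    · by_cases hωA : ω ∈ A
      · have : ω ∈ Gb := by
          have h1 : 2 * Bb ω ≤ X ω := hωG
          have h2 : Z ω ≤ Bb ω := hωA
          simp only [hGbdef, Set.mem_setOf_eq]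
          linarith
        simp [Set.indicator_of_mem hωG, Set.indicator_of_mem hωA,
          Set.indicator_of_mem this]
      · simp [Set.indicator_of_mem hωG, Set.indicator_of_notMem hωA,
          Set.indicator_nonneg (fun _ _ => (zero_le_one : (0:ℝ) ≤ 1)) ω]
    · simp [Set.indicator_of_notMem hωG,
        Set.indicator_nonneg (fun _ _ => (zero_le_one : (0:ℝ) ≤ 1)) ω]
  have hGAint : Integrable (G.indicator (A.indicator (fun _ => (1:ℝ)))) μ :=
    aux_indInt mΩ μ hAint (h𝒢 _ hG)
  have hmono2 : μ[G.indicator (A.indicator (fun _ => (1:ℝ))) | 𝒢]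
      ≤ᵐ[μ] μ[Gb.indicator (fun _ => (1:ℝ)) | 𝒢] :=
    condExp_mono hGAint hGbint hind
  have hpull : μ[G.indicator (A.indicator (fun _ => (1:ℝ))) | 𝒢]
      =ᵐ[μ] G.indicator (μ[A.indicator (fun _ => (1:ℝ)) | 𝒢]) :=
    condExp_indicator hAint hG
  -- main a.e. bound
  have main : ∀ᵐ ω ∂μ, 2 * Bb ω ≤ X ω →
      α ≤ (μ[F.indicator (fun _ => (1:ℝ)) | 𝒢]) ω := by
    filter_upwards [ha, htow, hmono1, hsmul, hmono2, hpull] with ω ha' htow' hm1 hs hm2 hp hωG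
    have hωG' : ω ∈ G := hωG
    have e1 : Real.sqrt α * (μ[A.indicator (fun _ => (1:ℝ)) | 𝒢]) ω
        ≤ (μ[F.indicator (fun _ => (1:ℝ)) | 𝒢]) ω := by
      have h4 : (μ[A.indicator (fun _ => (1:ℝ)) | 𝒢]) ω
          = G.indicator (μ[A.indicator (fun _ => (1:ℝ)) | 𝒢]) ω :=
        (Set.indicator_of_mem hωG' _).symm
      calc Real.sqrt α * (μ[A.indicator (fun _ => (1:ℝ)) | 𝒢]) ω
          = Real.sqrt α * (μ[G.indicator (A.indicator (fun _ => (1:ℝ))) | 𝒢]) ω := by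
            rw [h4, ← hp]
        _ ≤ Real.sqrt α * (μ[Gb.indicator (fun _ => (1:ℝ)) | 𝒢]) ω :=
            mul_le_mul_of_nonneg_left hm2 hsqrt0
        _ = (μ[(fun ω' => Real.sqrt α * Gb.indicator (fun _ => (1:ℝ)) ω') | 𝒢]) ω := hs.symm
        _ ≤ (μ[μ[F.indicator (fun _ => (1:ℝ)) | m'] | 𝒢]) ω := hm1
        _ = (μ[F.indicator (fun _ => (1:ℝ)) | 𝒢]) ω := htow'
    have e2 : α ≤ Real.sqrt α * (μ[A.indicator (fun _ => (1:ℝ)) | 𝒢]) ω := by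
      have : Real.sqrt α * Real.sqrt α ≤
          Real.sqrt α * (μ[A.indicator (fun _ => (1:ℝ)) | 𝒢]) ω :=
        mul_le_mul_of_nonneg_left ha' hsqrt0
      simpa [Real.mul_self_sqrt hα0.le] using this
    exact e2.trans e1
  refine ⟨main, ?_⟩
  filter_upwards [main] with ω h hlt
  by_contra hcon
  push_neg at hcon
  exact absurd (h hcon) (not_le.mpr hlt)
end
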